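/- arXiv:2308.04278 — 15 statements merged into one kernel-verified Lean document; each statement's English description precedes it below -/
import Mathlib

section
/- Let σ_w² > 0, 0 ≤ P_min < P_max, p_j ∈ [0,1], and P_a > 0 be reals with P_a ≤ min(P_min, P_L), where P_L = P_max − P_min, and let μ = (1−p_j)·δ_{σ_w²} + p_j·Unif[σ_w² + P_min, σ_w² + P_max]. Then the supremum over γ ∈ ℝ of μ([γ − P_a, γ)) equals max(1 − p_j, p_j·P_a/P_L); equivalently, the warden's minimum total detection error probability ξ* equals min(p_j, 1 − p_j·P_a/P_L). -/
open MeasureTheory Set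

theorem xi_star_case_Pa_le_min_Pmin_PL
    (σw Pmin Pmax pj Pa : ℝ)
    (hσw : 0 < σw) (hPmin : 0 ≤ Pmin) (hlt : Pmin < Pmax)
    (hpj0 : 0 ≤ pj) (hpj1 : pj ≤ 1) (hPa : 0 < Pa)
    (hcase : Pa ≤ min Pmin (Pmax - Pmin))
    (μ : Measure ℝ)
    (hμ : μ = ENNReal.ofReal (1 - pj) • Measure.dirac σw
        + ENNReal.ofReal pj •
          ((ENNReal.ofReal (Pmax - Pmin))⁻¹ •
            volume.restrict (Icc (σw + Pmin) (σw + Pmax)))) :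
    (⨆ γ : ℝ, μ (Ico (γ - Pa) γ))
      = ENNReal.ofReal (max (1 - pj) (pj * Pa / (Pmax - Pmin))) ∧
    (1 - ⨆ γ : ℝ, μ (Ico (γ - Pa) γ))
      = ENNReal.ofReal (min pj (1 - pj * Pa / (Pmax - Pmin))) := by
  obtain ⟨hPa_min, hPa_PL⟩ := le_min_iff.mp hcase
  have hPL0 : 0 < Pmax - Pmin := by linarith
  have hc0 : 0 ≤ pj * Pa / (Pmax - Pmin) := by positivity
  have hc1 : pj * Pa / (Pmax - Pmin) ≤ pj := by
    rw [div_le_iff₀ hPL0]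
    nlinarith
  -- key formula for the window measure
  have key : ∀ γ : ℝ, μ (Ico (γ - Pa) γ)
      = ENNReal.ofReal (1 - pj) * (Ico (γ - Pa) γ).indicator 1 σw
        + ENNReal.ofReal pj * ((ENNReal.ofReal (Pmax - Pmin))⁻¹
            * volume (Ico (γ - Pa) γ ∩ Icc (σw + Pmin) (σw + Pmax))) := by
    intro γ
    rw [hμ]
    simp [Measure.add_apply, Measure.smul_apply, smul_eq_mul,
      Measure.restrict_apply measurableSet_Ico,
      Measure.dirac_apply' _ measurableSet_Ico, mul_assoc]
  -- when σw is in the window, the uniform part vanishes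
  have hemp : ∀ γ : ℝ, σw ∈ Ico (γ - Pa) γ →
      Ico (γ - Pa) γ ∩ Icc (σw + Pmin) (σw + Pmax) = ∅ := by
    intro γ hmem
    apply eq_empty_of_forall_notMem
    rintro x ⟨⟨hx1, hx2⟩, ⟨hx3, hx4⟩⟩
    have h1 := hmem.1
    have h2 := hmem.2
    linarith
  have hprod : ENNReal.ofReal pj * ((ENNReal.ofReal (Pmax - Pmin))⁻¹
      * ENNReal.ofReal Pa) = ENNReal.ofReal (pj * Pa / (Pmax - Pmin)) := by
    rw [← ENNReal.ofReal_inv_of_pos hPL0,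
      ← ENNReal.ofReal_mul (by positivity),
      ← ENNReal.ofReal_mul hpj0]
    congr 1
    field_simp
  -- upper bound
  have hub : ∀ γ : ℝ, μ (Ico (γ - Pa) γ)
      ≤ ENNReal.ofReal (max (1 - pj) (pj * Pa / (Pmax - Pmin))) := by
    intro γ
    rw [key γ]
    by_cases hmem : σw ∈ Ico (γ - Pa) γ
    · rw [hemp γ hmem, indicator_of_mem hmem]
      simp only [Pi.one_apply, mul_one, measure_empty, mul_zero, add_zero]
      exact ENNReal.ofReal_le_ofReal (le_max_left _ _)
    · rw [indicator_of_notMem hmem]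
      simp only [mul_zero, zero_add]
      calc ENNReal.ofReal pj * ((ENNReal.ofReal (Pmax - Pmin))⁻¹
            * volume (Ico (γ - Pa) γ ∩ Icc (σw + Pmin) (σw + Pmax)))
          ≤ ENNReal.ofReal pj * ((ENNReal.ofReal (Pmax - Pmin))⁻¹
            * ENNReal.ofReal Pa) := by
            gcongr
            calc volume (Ico (γ - Pa) γ ∩ Icc (σw + Pmin) (σw + Pmax))
                ≤ volume (Ico (γ - Pa) γ) := measure_mono inter_subset_left
              _ = ENNReal.ofReal Pa := by rw [Real.volume_Ico]; congr 1; ring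
        _ = ENNReal.ofReal (pj * Pa / (Pmax - Pmin)) := hprod
        _ ≤ _ := ENNReal.ofReal_le_ofReal (le_max_right _ _)
  -- value at γ = σw + Pa : the dirac part
  have h1 : μ (Ico (σw + Pa - Pa) (σw + Pa)) = ENNReal.ofReal (1 - pj) := by
    rw [key]
    have hmem : σw ∈ Ico (σw + Pa - Pa) (σw + Pa) := by
      constructor <;> [linarith; linarith]
    rw [hemp _ hmem, indicator_of_mem hmem]
    simp
  -- value at γ = σw + Pmin + Pa : the uniform part
  have h2 : μ (Ico (σw + Pmin + Pa - Pa) (σw + Pmin + Pa))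
      = ENNReal.ofReal (pj * Pa / (Pmax - Pmin)) := by
    rw [key]
    have heq : σw + Pmin + Pa - Pa = σw + Pmin := by ring
    have hPmin0 : 0 < Pmin := lt_of_lt_of_le hPa hPa_min
    have hnmem : σw ∉ Ico (σw + Pmin + Pa - Pa) (σw + Pmin + Pa) := by
      rw [heq]
      intro h
      have := h.1
      linarith
    rw [indicator_of_notMem hnmem, heq]
    have hsub : Ico (σw + Pmin) (σw + Pmin + Pa) ⊆ Icc (σw + Pmin) (σw + Pmax) := by
      rintro x ⟨hx1, hx2⟩
      exact ⟨hx1, by linarith⟩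
    rw [inter_eq_left.mpr hsub, Real.volume_Ico]
    simp only [mul_zero, zero_add]
    rw [show σw + Pmin + Pa - (σw + Pmin) = Pa by ring]
    exact hprod
  have hsup : (⨆ γ : ℝ, μ (Ico (γ - Pa) γ))
      = ENNReal.ofReal (max (1 - pj) (pj * Pa / (Pmax - Pmin))) := by
    refine le_antisymm (iSup_le hub) ?_
    rcases le_total (1 - pj) (pj * Pa / (Pmax - Pmin)) with h | h
    · rw [max_eq_right h]
      exact h2 ▸ le_iSup (fun γ : ℝ => μ (Ico (γ - Pa) γ)) (σw + Pmin + Pa)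
    · rw [max_eq_left h]
      exact h1 ▸ le_iSup (fun γ : ℝ => μ (Ico (γ - Pa) γ)) (σw + Pa)
  refine ⟨hsup, ?_⟩
  rw [hsup]
  have hm0 : 0 ≤ max (1 - pj) (pj * Pa / (Pmax - Pmin)) :=
    le_trans hc0 (le_max_right _ _)
  rw [← ENNReal.ofReal_one, ← ENNReal.ofReal_sub 1 hm0]
  congr 1
  rcases le_total (1 - pj) (pj * Pa / (Pmax - Pmin)) with h | h
  · rw [max_eq_right h, min_eq_right (by linarith)]
  · rw [max_eq_left h, min_eq_left (by linarith)]; ring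
end

section
/- Let σ_w² > 0, 0 ≤ P_min < P_max, p_j ∈ [0,1], and P_a > 0 be reals with P_min < P_a ≤ P_L, where P_L = P_max − P_min, and let μ = (1−p_j)·δ_{σ_w²} + p_j·Unif[σ_w² + P_min, σ_w² + P_max]. Then the supremum over γ ∈ ℝ of μ([γ − P_a, γ)) equals max(1 − p_j·(P_max − P_a)/P_L, p_j·P_a/P_L); equivalently, the warden's minimum total detection error probability ξ* equals min(p_j·(P_max − P_a)/P_L, 1 − p_j·P_a/P_L). -/
/-!
A window `[γ - Pa, γ)` either contains the atom at `σw`, and then it meets the support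
`[σw + Pmin, σw + Pmax]` of the uniform part in length at most `Pa - Pmin`, or it misses the atom
and meets the support in length at most `Pa`. The first bound is attained at `γ = σw + Pa`; the
second at `γ = σw + Pmin + Pa` when `Pmin > 0`, and for `Pmin = 0` it is dominated by the first.
-/

open MeasureTheory Set

lemma volume_Ico_inter_Icc (a b c d : ℝ) :
    volume (Ico a b ∩ Icc c d) = ENNReal.ofReal (min b d - max a c) := by
  apply le_antisymm
  · calc volume (Ico a b ∩ Icc c d) ≤ volume (Icc (max a c) (min b d)) := by
          apply measure_mono
          rintro x ⟨⟨h1, h2⟩, h3, h4⟩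
          exact ⟨max_le h1 h3, le_min h2.le h4⟩
        _ = ENNReal.ofReal (min b d - max a c) := Real.volume_Icc
  · calc ENNReal.ofReal (min b d - max a c) = volume (Ico (max a c) (min b d)) :=
          Real.volume_Ico.symm
        _ ≤ volume (Ico a b ∩ Icc c d) := by
          apply measure_mono
          rintro x ⟨h1, h2⟩
          exact ⟨⟨(le_max_left a c).trans h1, h2.trans_le (min_le_left b d)⟩,
                 (le_max_right a c).trans h1, (h2.trans_le (min_le_right b d)).le⟩

/-- `(1 - p) δ_s + p Unif[s + m, s + M]`: the received power is the noise power `s`, plus with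
probability `p` a jamming power uniform on `[m, M]`. -/
noncomputable def jammerMixture (s m M p : ℝ) : Measure ℝ :=
  ENNReal.ofReal (1 - p) • Measure.dirac s
    + ENNReal.ofReal p • ((ENNReal.ofReal (M - m))⁻¹ • volume.restrict (Icc (s + m) (s + M)))

namespace jammerMixture

variable {s m M p P : ℝ}

lemma apply_Ico (hp : 0 ≤ p) (hmM : m < M) (γ : ℝ) :
    jammerMixture s m M p (Ico (γ - P) γ)
      = (Ico (γ - P) γ).indicator (fun _ ↦ ENNReal.ofReal (1 - p)) s
        + ENNReal.ofReal (p * (min γ (s + M) - max (γ - P) (s + m)) / (M - m)) := by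
  rw [jammerMixture, Measure.add_apply, Measure.smul_apply, Measure.smul_apply,
    Measure.smul_apply, Measure.dirac_apply' _ measurableSet_Ico,
    Measure.restrict_apply measurableSet_Ico, volume_Ico_inter_Icc]
  congr 1
  · by_cases h : s ∈ Ico (γ - P) γ <;> simp [h]
  · rw [smul_eq_mul, smul_eq_mul, mul_div_assoc, ENNReal.ofReal_mul hp,
      ENNReal.ofReal_div_of_pos (sub_pos.mpr hmM), ENNReal.div_eq_inv_mul]

lemma apply_Ico_le (hp0 : 0 ≤ p) (hp1 : p ≤ 1) (hmM : m < M) (hmP : m ≤ P) (γ : ℝ) :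
    jammerMixture s m M p (Ico (γ - P) γ)
      ≤ ENNReal.ofReal (max (1 - p * (M - P) / (M - m)) (p * P / (M - m))) := by
  have hlen : min γ (s + M) - max (γ - P) (s + m) ≤ P := by
    linarith [min_le_left γ (s + M), le_max_left (γ - P) (s + m)]
  rw [apply_Ico hp0 hmM]
  by_cases hs : s ∈ Ico (γ - P) γ
  · have hlen' : min γ (s + M) - max (γ - P) (s + m) ≤ P - m := by
      linarith [hs.1, min_le_left γ (s + M), le_max_right (γ - P) (s + m)]
    rw [indicator_of_mem hs]
    calc ENNReal.ofReal (1 - p)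
          + ENNReal.ofReal (p * (min γ (s + M) - max (γ - P) (s + m)) / (M - m))
        ≤ ENNReal.ofReal (1 - p) + ENNReal.ofReal (p * (P - m) / (M - m)) := by
          gcongr
      _ = ENNReal.ofReal (1 - p + p * (P - m) / (M - m)) :=
          (ENNReal.ofReal_add (by linarith)
            (div_nonneg (mul_nonneg hp0 (sub_nonneg.mpr hmP)) (sub_pos.mpr hmM).le)).symm
      _ = ENNReal.ofReal (1 - p * (M - P) / (M - m)) := by
          congr 1
          field_simp [(sub_pos.mpr hmM).ne']
          ring
      _ ≤ _ := ENNReal.ofReal_le_ofReal (le_max_left _ _)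
  · rw [indicator_of_notMem hs, zero_add]
    exact ENNReal.ofReal_le_ofReal (le_max_of_le_right (by gcongr))

lemma apply_Ico_containing_atom (hp0 : 0 ≤ p) (hp1 : p ≤ 1) (hm : 0 ≤ m) (hmP : m < P)
    (hPM : P ≤ M) :
    jammerMixture s m M p (Ico (s + P - P) (s + P))
      = ENNReal.ofReal (1 - p * (M - P) / (M - m)) := by
  have hmM : m < M := hmP.trans_le hPM
  have hs : s ∈ Ico (s + P - P) (s + P) := ⟨by simp, by linarith⟩
  rw [apply_Ico hp0 hmM, indicator_of_mem hs, min_eq_left (by linarith),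
    max_eq_right (by linarith), ← ENNReal.ofReal_add (by linarith)
      (div_nonneg (mul_nonneg hp0 (by linarith)) (by linarith))]
  congr 1
  field_simp [(sub_pos.mpr hmM).ne']
  ring

lemma apply_Ico_bottom_of_support (hp0 : 0 ≤ p) (hm : 0 < m) (hmPM : P ≤ M - m) (hmM : m < M) :
    jammerMixture s m M p (Ico (s + m + P - P) (s + m + P))
      = ENNReal.ofReal (p * P / (M - m)) := by
  have hs : s ∉ Ico (s + m + P - P) (s + m + P) := fun h ↦ by simp at h; linarith [h.1]
  rw [apply_Ico hp0 hmM, indicator_of_notMem hs, zero_add, min_eq_left (by linarith),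
    max_eq_right (by linarith)]
  ring_nf

lemma iSup_apply_Ico (hp0 : 0 ≤ p) (hp1 : p ≤ 1) (hm : 0 ≤ m) (hmM : m < M) (hmP : m < P)
    (hPM : P ≤ M - m) :
    ⨆ γ : ℝ, jammerMixture s m M p (Ico (γ - P) γ)
      = ENNReal.ofReal (max (1 - p * (M - P) / (M - m)) (p * P / (M - m))) := by
  refine le_antisymm (iSup_le (apply_Ico_le hp0 hp1 hmM hmP.le)) ?_
  have hatom := apply_Ico_containing_atom (s := s) hp0 hp1 hm hmP (hPM.trans (sub_le_self M hm))
  rw [ENNReal.ofReal_max]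
  refine max_le (le_iSup_of_le (s + P) hatom.ge) ?_
  rcases hm.lt_or_eq with hm | rfl
  · exact le_iSup_of_le (s + m + P) (apply_Ico_bottom_of_support hp0 hm hPM hmM).ge
  · refine le_trans (ENNReal.ofReal_le_ofReal ?_) (le_iSup_of_le (s + P) hatom.ge)
    have hgap : 1 - p * (M - P) / M = 1 - p + p * P / M := by
      field_simp [hmM.ne']
      ring
    rw [sub_zero, hgap]
    linarith

end jammerMixture

theorem xi_star_case_Pmin_lt_Pa_le_PL_general
    (σw Pmin Pmax pj Pa : ℝ)
    (hPmin : 0 ≤ Pmin) (hlt : Pmin < Pmax)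
    (hpj0 : 0 ≤ pj) (hpj1 : pj ≤ 1)
    (hcase1 : Pmin < Pa) (hcase2 : Pa ≤ Pmax - Pmin)
    (μ : Measure ℝ)
    (hμ : μ = ENNReal.ofReal (1 - pj) • Measure.dirac σw
        + ENNReal.ofReal pj •
          ((ENNReal.ofReal (Pmax - Pmin))⁻¹ •
            volume.restrict (Icc (σw + Pmin) (σw + Pmax)))) :
    (⨆ γ : ℝ, μ (Ico (γ - Pa) γ))
      = ENNReal.ofReal
          (max (1 - pj * (Pmax - Pa) / (Pmax - Pmin)) (pj * Pa / (Pmax - Pmin))) ∧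
    (1 - ⨆ γ : ℝ, μ (Ico (γ - Pa) γ))
      = ENNReal.ofReal
          (min (pj * (Pmax - Pa) / (Pmax - Pmin)) (1 - pj * Pa / (Pmax - Pmin))) := by
  obtain rfl : μ = jammerMixture σw Pmin Pmax pj := hμ
  have hsup := jammerMixture.iSup_apply_Ico (s := σw) hpj0 hpj1 hPmin hlt hcase1 hcase2
  refine ⟨hsup, ?_⟩
  have hmax : 0 ≤ max (1 - pj * (Pmax - Pa) / (Pmax - Pmin)) (pj * Pa / (Pmax - Pmin)) :=
    le_max_of_le_right (div_nonneg (mul_nonneg hpj0 (by linarith)) (by linarith))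
  rw [hsup, ← ENNReal.ofReal_one, ← ENNReal.ofReal_sub _ hmax, ← min_sub_sub_left,
    sub_sub_cancel]

theorem xi_star_case_Pmin_lt_Pa_le_PL
    (σw Pmin Pmax pj Pa : ℝ)
    (hσw : 0 < σw) (hPmin : 0 ≤ Pmin) (hlt : Pmin < Pmax)
    (hpj0 : 0 ≤ pj) (hpj1 : pj ≤ 1) (hPa : 0 < Pa)
    (hcase1 : Pmin < Pa) (hcase2 : Pa ≤ Pmax - Pmin)
    (μ : Measure ℝ)
    (hμ : μ = ENNReal.ofReal (1 - pj) • Measure.dirac σw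
        + ENNReal.ofReal pj •
          ((ENNReal.ofReal (Pmax - Pmin))⁻¹ •
            volume.restrict (Icc (σw + Pmin) (σw + Pmax)))) :
    (⨆ γ : ℝ, μ (Ico (γ - Pa) γ))
      = ENNReal.ofReal
          (max (1 - pj * (Pmax - Pa) / (Pmax - Pmin)) (pj * Pa / (Pmax - Pmin))) ∧
    (1 - ⨆ γ : ℝ, μ (Ico (γ - Pa) γ))
      = ENNReal.ofReal
          (min (pj * (Pmax - Pa) / (Pmax - Pmin)) (1 - pj * Pa / (Pmax - Pmin))) :=
  xi_star_case_Pmin_lt_Pa_le_PL_general σw Pmin Pmax pj Pa hPmin hlt hpj0 hpj1 hcase1 hcase2 μ hμ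
end

section
/- Let σ_w² > 0, 0 ≤ P_min < P_max, p_j ∈ [0,1], and P_a > 0 be reals with P_L < P_a ≤ P_min, where P_L = P_max − P_min, and let μ = (1−p_j)·δ_{σ_w²} + p_j·Unif[σ_w² + P_min, σ_w² + P_max]. Then the supremum over γ ∈ ℝ of μ([γ − P_a, γ)) equals max(p_j, 1 − p_j); equivalently, the warden's minimum total detection error probability ξ* equals min(p_j, 1 − p_j). -/
open MeasureTheory Set

theorem xi_star_case_PL_lt_Pa_le_Pmin
    (σw Pmin Pmax pj Pa : ℝ)
    (hσw : 0 < σw) (hPmin : 0 ≤ Pmin) (hlt : Pmin < Pmax)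
    (hpj0 : 0 ≤ pj) (hpj1 : pj ≤ 1) (hPa : 0 < Pa)
    (hcase1 : Pmax - Pmin < Pa) (hcase2 : Pa ≤ Pmin)
    (μ : Measure ℝ)
    (hμ : μ = ENNReal.ofReal (1 - pj) • Measure.dirac σw
        + ENNReal.ofReal pj •
          ((ENNReal.ofReal (Pmax - Pmin))⁻¹ •
            volume.restrict (Icc (σw + Pmin) (σw + Pmax)))) :
    (⨆ γ : ℝ, μ (Ico (γ - Pa) γ)) = ENNReal.ofReal (max pj (1 - pj)) ∧
    (1 - ⨆ γ : ℝ, μ (Ico (γ - Pa) γ)) = ENNReal.ofReal (min pj (1 - pj)) := by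
  have hPL : (0:ℝ) < Pmax - Pmin := by linarith
  have hPLne : ENNReal.ofReal (Pmax - Pmin) ≠ 0 := by
    simp [ENNReal.ofReal_eq_zero]; linarith
  have hPLnetop : ENNReal.ofReal (Pmax - Pmin) ≠ ⊤ := ENNReal.ofReal_ne_top
  -- evaluation of μ on Ico intervals
  have hval : ∀ γ : ℝ, μ (Ico (γ - Pa) γ) =
      (if σw ∈ Ico (γ - Pa) γ then ENNReal.ofReal (1 - pj) else 0)
      + ENNReal.ofReal pj * ((ENNReal.ofReal (Pmax - Pmin))⁻¹ *
          volume (Ico (γ - Pa) γ ∩ Icc (σw + Pmin) (σw + Pmax))) := by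
    intro γ
    rw [hμ]
    rw [Measure.add_apply, Measure.smul_apply, Measure.smul_apply,
      Measure.smul_apply, Measure.restrict_apply measurableSet_Ico,
      Measure.dirac_apply]
    simp [Set.indicator_apply, smul_eq_mul, mul_ite, mul_one, mul_zero]
  -- upper bound
  have hub : ∀ γ : ℝ, μ (Ico (γ - Pa) γ) ≤ ENNReal.ofReal (max pj (1 - pj)) := by
    intro γ
    rw [hval γ]
    by_cases h : σw ∈ Ico (γ - Pa) γ
    · have hγ : γ ≤ σw + Pa := by have := h.1; simp at this ⊢; linarith
      have hempty : Ico (γ - Pa) γ ∩ Icc (σw + Pmin) (σw + Pmax) = ∅ := by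
        ext x
        simp only [mem_inter_iff, mem_Ico, mem_Icc, mem_empty_iff_false, iff_false]
        rintro ⟨⟨_, hx2⟩, hx3, _⟩
        linarith
      rw [hempty]
      simp [h]
    · simp only [h, if_false, zero_add]
      have hsub : volume (Ico (γ - Pa) γ ∩ Icc (σw + Pmin) (σw + Pmax))
          ≤ ENNReal.ofReal (Pmax - Pmin) := by
        calc volume (Ico (γ - Pa) γ ∩ Icc (σw + Pmin) (σw + Pmax))
            ≤ volume (Icc (σw + Pmin) (σw + Pmax)) :=
              measure_mono inter_subset_right
          _ = ENNReal.ofReal (Pmax - Pmin) := by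
              rw [Real.volume_Icc]; ring_nf
      calc ENNReal.ofReal pj * ((ENNReal.ofReal (Pmax - Pmin))⁻¹ *
              volume (Ico (γ - Pa) γ ∩ Icc (σw + Pmin) (σw + Pmax)))
          ≤ ENNReal.ofReal pj * ((ENNReal.ofReal (Pmax - Pmin))⁻¹ *
              ENNReal.ofReal (Pmax - Pmin)) := by
            gcongr
        _ = ENNReal.ofReal pj := by
            rw [ENNReal.inv_mul_cancel hPLne hPLnetop, mul_one]
        _ ≤ ENNReal.ofReal (max pj (1 - pj)) :=
            ENNReal.ofReal_le_ofReal (le_max_left _ _)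
  -- value at γ = σw + Pa is 1 - pj
  have hv1 : μ (Ico (σw + Pa - Pa) (σw + Pa)) = ENNReal.ofReal (1 - pj) := by
    rw [hval]
    have hmem : σw ∈ Ico (σw + Pa - Pa) (σw + Pa) := by
      constructor <;> simp <;> linarith
    have hempty : Ico (σw + Pa - Pa) (σw + Pa) ∩ Icc (σw + Pmin) (σw + Pmax) = ∅ := by
      ext x
      simp only [mem_inter_iff, mem_Ico, mem_Icc, mem_empty_iff_false, iff_false]
      rintro ⟨⟨_, hx2⟩, hx3, _⟩
      linarith
    rw [hempty]
    simp [hmem]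
    intro h; linarith
  -- value at γ = σw + Pmin + Pa is pj
  have hv2 : μ (Ico (σw + Pmin + Pa - Pa) (σw + Pmin + Pa)) = ENNReal.ofReal pj := by
    rw [hval]
    have hPmin' : 0 < Pmin := lt_of_lt_of_le hPa hcase2
    have hmem : σw ∉ Ico (σw + Pmin + Pa - Pa) (σw + Pmin + Pa) := by
      simp only [mem_Ico, not_and]
      intro h
      exfalso; linarith [h]
    have hsubset : Icc (σw + Pmin) (σw + Pmax) ⊆ Ico (σw + Pmin + Pa - Pa) (σw + Pmin + Pa) := by
      intro x hx
      simp only [mem_Icc] at hx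
      constructor <;> [linarith [hx.1]; linarith [hx.2]]
    have hinter : Ico (σw + Pmin + Pa - Pa) (σw + Pmin + Pa) ∩ Icc (σw + Pmin) (σw + Pmax)
        = Icc (σw + Pmin) (σw + Pmax) := inter_eq_self_of_subset_right hsubset
    rw [hinter]
    have hvol : volume (Icc (σw + Pmin) (σw + Pmax)) = ENNReal.ofReal (Pmax - Pmin) := by
      rw [Real.volume_Icc]; ring_nf
    rw [hvol, ENNReal.inv_mul_cancel hPLne hPLnetop, mul_one, if_neg hmem, zero_add]
  have hsup : (⨆ γ : ℝ, μ (Ico (γ - Pa) γ)) = ENNReal.ofReal (max pj (1 - pj)) := by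
    apply le_antisymm
    · exact iSup_le hub
    · rcases max_cases pj (1 - pj) with ⟨hm, _⟩ | ⟨hm, _⟩
      · rw [hm, ← hv2]; exact le_iSup (fun γ => μ (Ico (γ - Pa) γ)) (σw + Pmin + Pa)
      · rw [hm, ← hv1]; exact le_iSup (fun γ => μ (Ico (γ - Pa) γ)) (σw + Pa)
  refine ⟨hsup, ?_⟩
  rw [hsup]
  have hmaxle : max pj (1 - pj) ≤ 1 := by
    apply max_le hpj1; linarith
  have hmax0 : 0 ≤ max pj (1 - pj) := le_max_of_le_left hpj0
  have hminmax : min pj (1 - pj) = 1 - max pj (1 - pj) := by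
    rcases le_total pj (1 - pj) with h | h
    · rw [min_eq_left h, max_eq_right h]; ring
    · rw [min_eq_right h, max_eq_left h]
  rw [hminmax, ENNReal.ofReal_sub _ hmax0]
  simp
end

section
/- For every real R > 0, the quantity ω(R) := 2^{R+1} − 2^R·R·ln 2 − R·ln 2 − 2 is strictly negative. -/
/-! With `x = R log 2` we have `2 ^ R = exp x`, and `ω(R) = exp x * (2 - x) - (x + 2)`.
This vanishes at `x = 0` and is strictly decreasing on `[0, ∞)`, since its derivative
`exp x * (1 - x) - 1` is negative for `x > 0` by `1 - x < exp (-x)`. -/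

open Real Set

namespace Real

lemma exp_mul_one_sub_lt_one {x : ℝ} (hx : x ≠ 0) : exp x * (1 - x) < 1 :=
  calc exp x * (1 - x) < exp x * exp (-x) :=
        mul_lt_mul_of_pos_left (one_sub_lt_exp_neg hx) (exp_pos x)
    _ = 1 := by rw [← exp_add, add_neg_cancel, exp_zero]

lemma hasDerivAt_exp_mul_two_sub_sub_add_two (x : ℝ) :
    HasDerivAt (fun x : ℝ => exp x * (2 - x) - (x + 2)) (exp x * (1 - x) - 1) x := by
  refine (((hasDerivAt_exp x).mul ((hasDerivAt_id' x).const_sub 2)).sub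
    ((hasDerivAt_id' x).add_const 2)).congr_deriv ?_
  ring

lemma strictAntiOn_exp_mul_two_sub_sub_add_two :
    StrictAntiOn (fun x : ℝ => exp x * (2 - x) - (x + 2)) (Ici 0) := by
  apply strictAntiOn_of_deriv_neg (convex_Ici 0) (by fun_prop)
  intro x hx
  rw [interior_Ici, mem_Ioi] at hx
  rw [(hasDerivAt_exp_mul_two_sub_sub_add_two x).deriv]
  linarith [exp_mul_one_sub_lt_one hx.ne']

lemma exp_mul_two_sub_lt_add_two {x : ℝ} (hx : 0 < x) : exp x * (2 - x) < x + 2 := by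
  have := strictAntiOn_exp_mul_two_sub_sub_add_two self_mem_Ici (mem_Ici.mpr hx.le) hx
  simp only [exp_zero, sub_zero, zero_add] at this
  linarith

end Real

theorem omega_neg (R : ℝ) (hR : 0 < R) :
    (2 : ℝ) ^ (R + 1) - (2 : ℝ) ^ R * R * Real.log 2 - R * Real.log 2 - 2 < 0 := by
  have hx : 0 < Real.log 2 * R := mul_pos (Real.log_pos one_lt_two) hR
  have h2R : (2 : ℝ) ^ R = exp (Real.log 2 * R) := rpow_def_of_pos two_pos R
  rw [rpow_add_one two_ne_zero, h2R]
  linarith [exp_mul_two_sub_lt_add_two hx]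
end

section
/- Let σ_b² > 0, P_a > 0, 0 ≤ P_min < P_max, and p_j ∈ (0,1] be reals. Then the function g(R) = R·(1 − p_j·(P_max − P_a/(2^R − 1) + σ_b²)/(P_max − P_min)) is strictly convex on the interval (0, ∞). -/
/-!
Expanding the outage probability, `g R = A * R + B * (R / (2 ^ R - 1))` with
`B = p_j P_a / (P_max - P_min) > 0`, and `R / (2 ^ R - 1)` is a positive multiple of
`t / (exp t - 1)` at `t = R log 2`. The latter is strictly convex on `(0, ∞)`: its second derivative
is `exp t * ((t - 2) * exp t + t + 2) / (exp t - 1) ^ 3`, and `(t - 2) * exp t + t + 2` vanishes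
at `0` with derivative `(t - 1) * exp t + 1`, which is positive because `1 - t < exp (-t)`.
-/

open Real Set

section StrictConvexOn

variable {𝕜 E F β : Type*} [CommSemiring 𝕜] [PartialOrder 𝕜] [AddCommMonoid E] [AddCommMonoid F]
  [AddCommMonoid β] [PartialOrder β]

theorem StrictConvexOn.comp_linearMap [Module 𝕜 E] [Module 𝕜 F] [SMul 𝕜 β] {f : F → β}
    {s : Set F} (hf : StrictConvexOn 𝕜 s f) (g : E →ₗ[𝕜] F) (hg : Function.Injective g) :
    StrictConvexOn 𝕜 (g ⁻¹' s) (f ∘ g) :=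
  ⟨hf.1.linear_preimage _, fun x hx y hy hxy a b ha hb hab =>
    calc
      f (g (a • x + b • y)) = f (a • g x + b • g y) := by rw [g.map_add, g.map_smul, g.map_smul]
      _ < a • f (g x) + b • f (g y) := hf.2 hx hy (hg.ne hxy) ha hb hab⟩

theorem StrictConvexOn.smul [SMul 𝕜 E] [Module 𝕜 β] [PosSMulStrictMono 𝕜 β] {s : Set E}
    {f : E → β} {c : 𝕜} (hc : 0 < c) (hf : StrictConvexOn 𝕜 s f) :
    StrictConvexOn 𝕜 s fun x => c • f x :=
  ⟨hf.1, fun x hx y hy hxy a b ha hb hab =>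
    calc
      c • f (a • x + b • y) < c • (a • f x + b • f y) :=
        smul_lt_smul_of_pos_left (hf.2 hx hy hxy ha hb hab) hc
      _ = a • c • f x + b • c • f y := by rw [smul_add, smul_comm c, smul_comm c]⟩

end StrictConvexOn

theorem one_sub_mul_exp_lt_one {t : ℝ} (ht : t ≠ 0) : (1 - t) * exp t < 1 := by
  calc (1 - t) * exp t < exp (-t) * exp t := by gcongr; exact one_sub_lt_exp_neg ht
    _ = 1 := by rw [← exp_add, neg_add_cancel, exp_zero]

theorem sub_two_mul_exp_add_pos {t : ℝ} (ht : 0 < t) : 0 < (t - 2) * exp t + t + 2 := by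
  have hmono : StrictMonoOn (fun s => (s - 2) * exp s + s + 2) (Ici 0) := by
    refine strictMonoOn_of_hasDerivWithinAt_pos (convex_Ici 0) (by fun_prop)
      (f' := fun s => (s - 1) * exp s + 1) (fun s _ => ?_) (fun s hs => ?_)
    · have := ((((hasDerivAt_id' s).sub_const 2).mul (hasDerivAt_exp s)).add
        (hasDerivAt_id' s)).add_const 2
      exact this.hasDerivWithinAt.congr_deriv (by ring)
    · rw [interior_Ici] at hs
      linarith [one_sub_mul_exp_lt_one hs.ne']
  simpa using hmono self_mem_Ici ht.le ht

theorem hasDerivAt_div_exp_sub_one {t : ℝ} (ht : t ≠ 0) :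
    HasDerivAt (fun t => t / (exp t - 1)) ((exp t - 1 - t * exp t) / (exp t - 1) ^ 2) t := by
  have hne : exp t - 1 ≠ 0 := sub_ne_zero.2 (exp_eq_one_iff t |>.not.2 ht)
  exact ((hasDerivAt_id' t).div ((hasDerivAt_exp t).sub_const 1) hne).congr_deriv (by ring)

theorem hasDerivAt_deriv_div_exp_sub_one {t : ℝ} (ht : t ≠ 0) :
    HasDerivAt (fun t => (exp t - 1 - t * exp t) / (exp t - 1) ^ 2)
      (exp t * ((t - 2) * exp t + t + 2) / (exp t - 1) ^ 3) t := by
  have hne : exp t - 1 ≠ 0 := sub_ne_zero.2 (exp_eq_one_iff t |>.not.2 ht)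
  have hnum : HasDerivAt (fun t => exp t - 1 - t * exp t) (-(t * exp t)) t :=
    (((hasDerivAt_exp t).sub_const 1).sub ((hasDerivAt_id' t).mul (hasDerivAt_exp t))).congr_deriv
      (by ring)
  have hden : HasDerivAt (fun t => (exp t - 1) ^ 2) (2 * (exp t - 1) * exp t) t :=
    (((hasDerivAt_exp t).sub_const 1).pow 2).congr_deriv (by push_cast; ring)
  refine (hnum.div hden (pow_ne_zero 2 hne)).congr_deriv ?_
  field_simp
  ring

theorem strictConvexOn_div_exp_sub_one :
    StrictConvexOn ℝ (Ioi 0) (fun t => t / (exp t - 1)) := by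
  refine StrictMonoOn.strictConvexOn_of_deriv (convex_Ioi 0)
    (fun t ht => (hasDerivAt_div_exp_sub_one (ne_of_gt ht)).continuousAt.continuousWithinAt) ?_
  rw [interior_Ioi]
  refine StrictMonoOn.congr ?_ fun t ht => (hasDerivAt_div_exp_sub_one (ne_of_gt ht)).deriv.symm
  have hderiv2 (t : ℝ) (ht : t ∈ Ioi 0) := hasDerivAt_deriv_div_exp_sub_one (ne_of_gt ht)
  refine strictMonoOn_of_hasDerivWithinAt_pos (convex_Ioi 0)
    (fun t ht => (hderiv2 t ht).continuousAt.continuousWithinAt)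
    (fun t ht => (hderiv2 t (interior_subset ht)).hasDerivWithinAt) ?_
  intro t ht
  rw [interior_Ioi] at ht
  have hexp : 0 < exp t - 1 := sub_pos.2 (one_lt_exp_iff.2 ht)
  exact div_pos (mul_pos (exp_pos t) (sub_two_mul_exp_add_pos ht)) (pow_pos hexp 3)

theorem strictConvexOn_div_rpow_sub_one {b : ℝ} (hb : 1 < b) :
    StrictConvexOn ℝ (Ioi 0) (fun x => x / (b ^ x - 1)) := by
  have hk : 0 < log b := log_pos hb
  have h := (strictConvexOn_div_exp_sub_one.comp_linearMap (LinearMap.mul ℝ ℝ (log b))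
    (mul_right_injective₀ hk.ne')).smul (inv_pos.2 hk)
  have hpre : LinearMap.mul ℝ ℝ (log b) ⁻¹' Ioi 0 = Ioi 0 := by
    ext x; simp [mul_pos_iff_of_pos_left hk]
  rw [hpre] at h
  refine h.congr fun x _ => ?_
  simp only [Function.comp_apply, LinearMap.mul_apply_apply, smul_eq_mul,
    rpow_def_of_pos (zero_lt_one.trans hb)]
  field_simp

theorem covert_throughput_strictly_convex_general
    (σb Pa Pmin Pmax pj : ℝ)
    (hPa : 0 < Pa) (hlt : Pmin < Pmax)
    (hpj0 : 0 < pj) :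
    StrictConvexOn ℝ (Set.Ioi (0 : ℝ))
      (fun R : ℝ =>
        R * (1 - pj * (Pmax - Pa / ((2 : ℝ) ^ R - 1) + σb) / (Pmax - Pmin))) := by
  have hB : 0 < pj * Pa / (Pmax - Pmin) := by have := sub_pos.2 hlt; positivity
  have h := (LinearMap.mul ℝ ℝ (1 - pj * (Pmax + σb) / (Pmax - Pmin))).convexOn (convex_Ioi 0)
    |>.add_strictConvexOn ((strictConvexOn_div_rpow_sub_one one_lt_two).smul hB)
  refine h.congr fun R _ => ?_
  simp only [Pi.add_apply, LinearMap.mul_apply', smul_eq_mul]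
  ring

theorem covert_throughput_strictly_convex
    (σb Pa Pmin Pmax pj : ℝ)
    (hσb : 0 < σb) (hPa : 0 < Pa) (hPmin : 0 ≤ Pmin) (hlt : Pmin < Pmax)
    (hpj0 : 0 < pj) (hpj1 : pj ≤ 1) :
    StrictConvexOn ℝ (Set.Ioi (0 : ℝ))
      (fun R : ℝ =>
        R * (1 - pj * (Pmax - Pa / ((2 : ℝ) ^ R - 1) + σb) / (Pmax - Pmin))) :=
  covert_throughput_strictly_convex_general σb Pa Pmin Pmax pj hPa hlt hpj0
end

section
/- Let σ_b² > 0, P_a > 0, 0 ≤ P_min < P_max, and p_j ∈ [0,1] be reals. Define C_n = log₂(1 + P_a/(σ_b² + P_max)), C_j = log₂(1 + P_a/(σ_b² + P_min)), C_f = log₂(1 + P_a/σ_b²), P_r(R) = P_a/(2^R − 1) − σ_b², and the covert throughput Ω(R) = R for 0 ≤ R ≤ C_n, Ω(R) = R·(1 − p_j·(P_max − P_r(R))/(P_max − P_min)) for C_n ≤ R ≤ C_j, and Ω(R) = (1 − p_j)·R for C_j ≤ R ≤ C_f (these pieces agree at R = C_n and R = C_j). Then for every R ∈ [0, C_f] one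 has Ω(R) ≤ max(Ω(C_n), Ω(C_f)) = max(C_n, (1 − p_j)·C_f); that is, the maximum of the covert throughput over [0, C_f] is attained at R = C_n or at R = C_f. -/
/-!
On `[0, Cn]` and `[Cj, Cf]` the throughput is `R` resp. `(1 - pj) R`, increasing in `R`. On the
middle piece write `x = σb + Pr R`, the noise-plus-jamming level at which `R` is the capacity, so
that `R = g x` with `g x = log₂ (1 + Pa / x)`, while the factor
`1 - pj (Pmax - Pr R) / (Pmax - Pmin)` is affine in `x`: it equals `t (1 - pj) + (1 - t)` where
`x = t a + (1 - t) b`, `a = σb + Pmin`, `b = σb + Pmax`. Since `1 / g` is concave (which comes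
down to `log (1 + u) ≥ 2u / (u + 2)`), `g x` is at most the weighted harmonic mean of `g a = Cj`
and `g b = Cn`, and then `Ω R ≤ max Cn ((1 - pj) Cj)`.
-/

open Real Set

lemma hasDerivAt_log_one_add_div {c x : ℝ} (hc : 0 < c) (hx : 0 < x) :
    HasDerivAt (fun y => log (1 + c / y)) (-c / (x * (x + c))) x := by
  have h : HasDerivAt (fun y => 1 + c / y) (c * -(x ^ 2)⁻¹) x := by
    simpa [div_eq_mul_inv] using ((hasDerivAt_inv hx.ne').const_mul c).const_add 1
  convert h.log (by positivity) using 1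
  field_simp

lemma concaveOn_inv_log_one_add_div {c : ℝ} (hc : 0 < c) :
    ConcaveOn ℝ (Ioi 0) fun x => (log (1 + c / x))⁻¹ := by
  have hu_pos : ∀ x > 0, 0 < log (1 + c / x) := fun x hx =>
    log_pos (lt_add_of_pos_right 1 (div_pos hc hx))
  have hf' : ∀ x > 0, HasDerivAt (fun y => (log (1 + c / y))⁻¹)
      (c / (x * (x + c) * log (1 + c / x) ^ 2)) x := fun x hx => by
    refine ((hasDerivAt_log_one_add_div hc hx).inv (hu_pos x hx).ne').congr_deriv ?_
    have hL := hu_pos x hx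
    generalize log (1 + c / x) = L at hL ⊢
    field_simp
  have hf'' : ∀ x > 0, HasDerivAt (fun y => c / (y * (y + c) * log (1 + c / y) ^ 2))
      (-c * ((2 * x + c) * log (1 + c / x) - 2 * c) / ((x * (x + c)) ^ 2 * log (1 + c / x) ^ 3))
      x := fun x hx => by
    have hq : HasDerivAt (fun y => y * (y + c)) (1 * (x + c) + x * 1) x :=
      (hasDerivAt_id' x).fun_mul ((hasDerivAt_id' x).add_const c)
    have hL := hu_pos x hx
    refine ((hasDerivAt_const x c).div (hq.fun_mul ((hasDerivAt_log_one_add_div hc hx).fun_pow 2))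
      (by positivity)).congr_deriv ?_
    generalize log (1 + c / x) = L at hL ⊢
    field_simp
    ring
  -- `log (1 + t) ≥ 2t / (t + 2)` at `t = c / x` is the sign condition on the second derivative
  have hsign : ∀ x > 0, 2 * c ≤ (2 * x + c) * log (1 + c / x) := fun x hx => by
    have h := le_log_one_add_of_nonneg (div_pos hc hx).le
    rw [show 2 * (c / x) / (c / x + 2) = 2 * c / (2 * x + c) by field_simp; ring,
      div_le_iff₀ (by positivity)] at h
    linarith
  refine concaveOn_of_hasDerivWithinAt2_nonpos (convex_Ioi 0)
    (fun x hx => (hf' x hx).continuousAt.continuousWithinAt)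
    (fun x hx => (hf' x (by simpa using hx)).hasDerivWithinAt)
    (fun x hx => (hf'' x (by simpa using hx)).hasDerivWithinAt) fun x hx => ?_
  rw [interior_Ioi] at hx
  have := hu_pos x hx
  have := hsign x hx
  exact div_nonpos_of_nonpos_of_nonneg (by nlinarith) (by positivity)

lemma concaveOn_inv_logb_one_add_div {b c : ℝ} (hb : 1 < b) (hc : 0 < c) :
    ConcaveOn ℝ (Ioi 0) fun x => (logb b (1 + c / x))⁻¹ := by
  refine ((concaveOn_inv_log_one_add_div hc).smul (log_pos hb).le).congr fun x _ => ?_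
  beta_reduce
  rw [smul_eq_mul, ← div_eq_mul_inv, logb, inv_div]

lemma strictAntiOn_logb_one_add_div {b c : ℝ} (hb : 1 < b) (hc : 0 < c) :
    StrictAntiOn (fun x => logb b (1 + c / x)) (Ioi 0) := fun x hx y _ hxy =>
  logb_lt_logb hb (by have := hx.out.trans hxy; positivity)
    (add_lt_add_right (div_lt_div_of_pos_left hc hx hxy) 1)

lemma logb_one_add_div_div_rpow_sub_one {b c R : ℝ} (hb : 1 < b) (hc : 0 < c) :
    logb b (1 + c / (c / (b ^ R - 1))) = R := by
  rw [div_div_cancel₀ hc.ne', add_sub_cancel, logb_rpow (by linarith) hb.ne']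

lemma div_rpow_logb_one_add_div_sub_one {b c y : ℝ} (hb : 1 < b) (hc : 0 < c) (hy : 0 < y) :
    c / (b ^ logb b (1 + c / y) - 1) = y := by
  rw [rpow_logb (by linarith) hb.ne' (by positivity), add_sub_cancel_left, div_div_cancel₀ hc.ne']

lemma mul_one_sub_mul_div_le_of_concaveOn_inv {f : ℝ → ℝ} {s : Set ℝ} {a b x p M : ℝ}
    (hf : ConcaveOn ℝ s fun x => (f x)⁻¹) (ha : a ∈ s) (hb : b ∈ s) (hab : a < b)
    (hx : x ∈ Icc a b) (hfa : 0 < f a) (hfb : 0 < f b)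
    (hMa : (1 - p) * f a ≤ M) (hMb : f b ≤ M) :
    f x * (1 - p * (b - x) / (b - a)) ≤ M := by
  obtain ⟨hxa, hxb⟩ := hx
  have hba : 0 < b - a := sub_pos.2 hab
  set t := (b - x) / (b - a) with ht
  have ht0 : 0 ≤ t := div_nonneg (by linarith) hba.le
  have ht1 : 0 ≤ 1 - t := by rw [ht, one_sub_div hba.ne']; exact div_nonneg (by linarith) hba.le
  have hH : t * (f a)⁻¹ + (1 - t) * (f b)⁻¹ ≤ (f x)⁻¹ := by
    have hcomb : t * a + (1 - t) * b = x := by rw [ht]; field_simp; ring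
    simpa only [smul_eq_mul, hcomb] using hf.2 ha hb ht0 ht1 (add_sub_cancel t 1)
  have hfx : 0 < f x := by
    have hm : 0 < min (f a)⁻¹ (f b)⁻¹ := lt_min (inv_pos.2 hfa) (inv_pos.2 hfb)
    refine inv_pos.1 (hH.trans_lt' ?_)
    nlinarith [mul_le_mul_of_nonneg_left (min_le_left (f a)⁻¹ (f b)⁻¹) ht0,
      mul_le_mul_of_nonneg_left (min_le_right (f a)⁻¹ (f b)⁻¹) ht1]
  have hM : 0 ≤ M := hfb.le.trans hMb
  have h1 : 1 - p ≤ M * (f a)⁻¹ := by rwa [← div_eq_mul_inv, le_div_iff₀ hfa]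
  have h2 : 1 ≤ M * (f b)⁻¹ := by rwa [← div_eq_mul_inv, le_div_iff₀ hfb, one_mul]
  calc f x * (1 - p * (b - x) / (b - a)) = f x * (t * (1 - p) + (1 - t) * 1) := by ring
    _ ≤ f x * (M * (t * (f a)⁻¹ + (1 - t) * (f b)⁻¹)) := by
        gcongr; nlinarith [mul_le_mul_of_nonneg_left h1 ht0, mul_le_mul_of_nonneg_left h2 ht1]
    _ ≤ f x * (M * (f x)⁻¹) := by gcongr
    _ = M := by field_simp

lemma throughput_le_of_mem_Ioc {c a b p M R : ℝ} (hc : 0 < c) (ha : 0 < a) (hab : a < b)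
    (hR : R ∈ Ioc (logb 2 (1 + c / b)) (logb 2 (1 + c / a)))
    (hMa : (1 - p) * logb 2 (1 + c / a) ≤ M) (hMb : logb 2 (1 + c / b) ≤ M) :
    R * (1 - p * (b - c / (2 ^ R - 1)) / (b - a)) ≤ M := by
  set f : ℝ → ℝ := fun x => logb 2 (1 + c / x)
  have hanti : StrictAntiOn f (Ioi 0) := strictAntiOn_logb_one_add_div one_lt_two hc
  have hb : 0 < b := ha.trans hab
  have hfb : 0 < f b := logb_pos one_lt_two (lt_add_of_pos_right 1 (div_pos hc hb))
  have hR0 : 0 < R := hfb.trans hR.1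
  set x := c / (2 ^ R - 1)
  have hx : 0 < x := div_pos hc (sub_pos.2 (one_lt_rpow one_lt_two hR0))
  have hfx : f x = R := logb_one_add_div_div_rpow_sub_one one_lt_two hc
  have hxa : a ≤ x := (hanti.le_iff_ge hx ha).1 (hfx ▸ hR.2)
  have hxb : x < b := (hanti.lt_iff_gt hb hx).1 (hfx ▸ hR.1)
  rw [← hfx]
  exact mul_one_sub_mul_div_le_of_concaveOn_inv (concaveOn_inv_logb_one_add_div one_lt_two hc)
    ha hb hab ⟨hxa, hxb.le⟩ (hfb.trans (hanti ha hb hab)) hfb hMa hMb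

theorem covert_throughput_max_at_Cn_or_Cf_general
    (σb Pa Pmin Pmax pj : ℝ)
    (hσb : 0 < σb) (hPa : 0 < Pa) (hPmin : 0 ≤ Pmin) (hlt : Pmin < Pmax)
    (hpj1 : pj ≤ 1)
    (Cn Cj Cf : ℝ)
    (hCn : Cn = Real.logb 2 (1 + Pa / (σb + Pmax)))
    (hCj : Cj = Real.logb 2 (1 + Pa / (σb + Pmin)))
    (hCf : Cf = Real.logb 2 (1 + Pa / σb))
    (Pr : ℝ → ℝ) (hPr : ∀ R, Pr R = Pa / ((2 : ℝ) ^ R - 1) - σb)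
    (Ω : ℝ → ℝ)
    (hΩ : ∀ R, Ω R =
      if R ≤ Cn then R
      else if R ≤ Cj then R * (1 - pj * (Pmax - Pr R) / (Pmax - Pmin))
      else (1 - pj) * R) :
    (∀ R ∈ Set.Icc (0 : ℝ) Cf, Ω R ≤ max (Ω Cn) (Ω Cf)) ∧
    max (Ω Cn) (Ω Cf) = max Cn ((1 - pj) * Cf) := by
  have hanti := strictAntiOn_logb_one_add_div one_lt_two hPa
  have hσPmin : 0 < σb + Pmin := by linarith
  have hCnCf : Cn < Cf := hCn ▸ hCf ▸ hanti hσb (mem_Ioi.2 (by linarith)) (by linarith)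
  have hCjCf : Cj ≤ Cf := hCj ▸ hCf ▸ hanti.antitoneOn hσb hσPmin (by linarith)
  have hPrCj : Pr Cj = Pmin := by
    rw [hPr, hCj, div_rpow_logb_one_add_div_sub_one one_lt_two hPa hσPmin, add_sub_cancel_left]
  have hΩCn : Ω Cn = Cn := by rw [hΩ, if_pos le_rfl]
  have hΩCf : Ω Cf = (1 - pj) * Cf := by
    rw [hΩ, if_neg hCnCf.not_ge]
    split_ifs with hCfCj
    · obtain rfl : Cf = Cj := le_antisymm hCfCj hCjCf
      rw [hPrCj, mul_div_assoc, div_self (sub_ne_zero.2 hlt.ne'), mul_one, mul_comm]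
    · rfl
  refine ⟨fun R ⟨_, hRCf⟩ => ?_, by rw [hΩCn, hΩCf]⟩
  have hCfM : (1 - pj) * Cf ≤ max Cn ((1 - pj) * Cf) := le_max_right _ _
  rw [hΩCn, hΩCf, hΩ]
  split_ifs with hRCn hRCj
  · exact hRCn.trans (le_max_left _ _)
  · subst hCn hCj
    convert throughput_le_of_mem_Ioc hPa hσPmin (by linarith : σb + Pmin < σb + Pmax)
      ⟨not_le.1 hRCn, hRCj⟩ ((mul_le_mul_of_nonneg_left hCjCf (by linarith)).trans hCfM)
      (le_max_left _ _) using 3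
    rw [hPr]; ring
  · exact (mul_le_mul_of_nonneg_left hRCf (by linarith)).trans hCfM

theorem covert_throughput_max_at_Cn_or_Cf
    (σb Pa Pmin Pmax pj : ℝ)
    (hσb : 0 < σb) (hPa : 0 < Pa) (hPmin : 0 ≤ Pmin) (hlt : Pmin < Pmax)
    (hpj0 : 0 ≤ pj) (hpj1 : pj ≤ 1)
    (Cn Cj Cf : ℝ)
    (hCn : Cn = Real.logb 2 (1 + Pa / (σb + Pmax)))
    (hCj : Cj = Real.logb 2 (1 + Pa / (σb + Pmin)))
    (hCf : Cf = Real.logb 2 (1 + Pa / σb))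
    (Pr : ℝ → ℝ) (hPr : ∀ R, Pr R = Pa / ((2 : ℝ) ^ R - 1) - σb)
    (Ω : ℝ → ℝ)
    (hΩ : ∀ R, Ω R =
      if R ≤ Cn then R
      else if R ≤ Cj then R * (1 - pj * (Pmax - Pr R) / (Pmax - Pmin))
      else (1 - pj) * R) :
    (∀ R ∈ Set.Icc (0 : ℝ) Cf, Ω R ≤ max (Ω Cn) (Ω Cf)) ∧
    max (Ω Cn) (Ω Cf) = max Cn ((1 - pj) * Cf) :=
  covert_throughput_max_at_Cn_or_Cf_general σb Pa Pmin Pmax pj hσb hPa hPmin hlt hpj1 Cn Cj Cf hCn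
    hCj hCf Pr hPr Ω hΩ
end

section
/- Let ε ∈ (0, 1/2), P_m > 0, and P_a > 0 be reals. Then there exist reals p_j, P_min, P_max with 1 − ε ≤ p_j ≤ 1 and 0 ≤ P_min < P_max satisfying the covertness constraints p_j ≥ 1 − ε, P_max − P_min ≥ (p_j/ε)·P_a, (p_j/(1−ε) − 1)·P_max + P_min ≥ (p_j/(1−ε))·P_a, together with the average jamming power constraint (p_j/2)·(P_min + P_max) ≤ P_m, if and only if P_a ≤ 2ε·P_m/(1 − ε²). -/
theorem feasibility_global
    (ε Pm Pa : ℝ) (hε0 : 0 < ε) (hε1 : ε < 1/2) (hPm : 0 < Pm) (hPa : 0 < Pa) :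
    (∃ pj Pmin Pmax : ℝ,
        1 - ε ≤ pj ∧ pj ≤ 1 ∧ 0 ≤ Pmin ∧ Pmin < Pmax ∧
        pj / ε * Pa ≤ Pmax - Pmin ∧
        pj / (1 - ε) * Pa ≤ (pj / (1 - ε) - 1) * Pmax + Pmin ∧
        pj / 2 * (Pmin + Pmax) ≤ Pm) ↔
      Pa ≤ 2 * ε * Pm / (1 - ε ^ 2) := by
  have hε1' : (0:ℝ) < 1 - ε := by linarith
  have hε2 : (0:ℝ) < 1 - ε ^ 2 := by nlinarith
  constructor
  · rintro ⟨pj, Pmin, Pmax, hpj1, hpj2, hPmin, hlt, hC1, hC2, hC3⟩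
    rw [le_div_iff₀ hε2]
    have h1 : pj * Pa ≤ ε * (Pmax - Pmin) := by
      have h := mul_le_mul_of_nonneg_left hC1 hε0.le
      have e : ε * (pj / ε * Pa) = pj * Pa := by field_simp
      rw [e] at h; exact h
    have h2 : pj * Pa ≤ (pj - (1 - ε)) * Pmax + (1 - ε) * Pmin := by
      have h := mul_le_mul_of_nonneg_left hC2 hε1'.le
      have e1 : (1 - ε) * (pj / (1 - ε) * Pa) = pj * Pa := by
        field_simp
      have e2 : (1 - ε) * ((pj / (1 - ε) - 1) * Pmax + Pmin)
          = (pj - (1 - ε)) * Pmax + (1 - ε) * Pmin := by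
        field_simp
      rw [e1, e2] at h
      exact h
    have hpos1 : 0 ≤ 2 * (1 - ε) - pj := by linarith
    have hpos2 : 0 ≤ ε - (1 - pj) := by linarith
    have hpos3 : 0 ≤ ε + (1 - pj) := by linarith
    nlinarith [mul_nonneg hpos1 (by linarith : (0:ℝ) ≤ ε * (Pmax - Pmin) - pj * Pa),
      mul_nonneg hε0.le (by linarith : (0:ℝ) ≤ (pj - (1 - ε)) * Pmax + (1 - ε) * Pmin - pj * Pa),
      mul_nonneg (mul_nonneg hpos2 hpos3) hPa.le,
      mul_nonneg hε0.le (by linarith : (0:ℝ) ≤ 2 * Pm - pj * (Pmin + Pmax))]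
  · intro h
    refine ⟨1 - ε, Pa, Pa / ε, le_refl _, by linarith, hPa.le, ?_, ?_, ?_, ?_⟩
    · rw [lt_div_iff₀ hε0]; nlinarith
    · have e : Pa / ε - Pa = (1 - ε) / ε * Pa := by field_simp
      rw [e]
    · have : (1 - ε) / (1 - ε) = 1 := div_self hε1'.ne'
      rw [this]; simp
    · rw [le_div_iff₀ hε2] at h
      have : (1 - ε) / 2 * (Pa + Pa / ε) = Pa * (1 - ε ^ 2) / (2 * ε) := by
        field_simp; ring
      rw [this, div_le_iff₀ (by positivity)]
      nlinarith
end

section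
/- Let ε ∈ (0, 1/2), P_m > 0, P_a > 0, and p_j ∈ [1 − ε, 1] be reals. Then there exist reals P_min, P_max with 0 ≤ P_min < P_max satisfying the covertness constraints P_max − P_min ≥ (p_j/ε)·P_a and (p_j/(1−ε) − 1)·P_max + P_min ≥ (p_j/(1−ε))·P_a, together with the average jamming power constraint (p_j/2)·(P_min + P_max) ≤ P_m, if and only if P_a ≤ 2ε·P_m/(2·p_j − p_j²). In particular, the maximum feasible jamming transmission probability is p_ju = 1 if P_a ≤ 2ε·P_m, and p_ju = 1 − √(1 − 2ε·P_m/P_a) if 2ε·P_m ≤ P_a ≤ 2ε·P_m/(1 − ε²). -/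
theorem feasibility_given_pj
    (ε Pm Pa pj : ℝ) (hε0 : 0 < ε) (hε1 : ε < 1/2) (hPm : 0 < Pm) (hPa : 0 < Pa)
    (hpjl : 1 - ε ≤ pj) (hpju : pj ≤ 1) :
    ((∃ Pmin Pmax : ℝ,
        0 ≤ Pmin ∧ Pmin < Pmax ∧
        pj / ε * Pa ≤ Pmax - Pmin ∧
        pj / (1 - ε) * Pa ≤ (pj / (1 - ε) - 1) * Pmax + Pmin ∧
        pj / 2 * (Pmin + Pmax) ≤ Pm) ↔
      Pa ≤ 2 * ε * Pm / (2 * pj - pj ^ 2)) ∧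
    (Pa ≤ 2 * ε * Pm → Pa ≤ 2 * ε * Pm / (2 * pj - pj ^ 2)) ∧
    (2 * ε * Pm ≤ Pa → Pa ≤ 2 * ε * Pm / (1 - ε ^ 2) →
      (Pa ≤ 2 * ε * Pm / (2 * pj - pj ^ 2) ↔
        pj ≤ 1 - Real.sqrt (1 - 2 * ε * Pm / Pa))) := by
  have hε2 : 0 < 1 - ε := by linarith
  have hpj0 : 0 < pj := by linarith
  have hq : 0 < 2 * pj - pj ^ 2 := by nlinarith
  refine ⟨⟨?_, ?_⟩, ?_, ?_⟩
  · rintro ⟨Pmin, Pmax, h0, hlt, h1, h2, h3⟩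
    rw [le_div_iff₀ hq]
    -- clear denominators in h1, h2
    have h1' : pj * Pa ≤ ε * (Pmax - Pmin) := by
      rw [div_mul_eq_mul_div, div_le_iff₀ hε0] at h1
      linarith [h1]
    have h2' : pj * Pa ≤ (pj - (1 - ε)) * Pmax + (1 - ε) * Pmin := by
      rw [div_mul_eq_mul_div, div_le_iff₀ hε2] at h2
      have e : ((pj / (1 - ε) - 1) * Pmax + Pmin) * (1 - ε)
          = (pj - (1 - ε)) * Pmax + (1 - ε) * Pmin := by field_simp
      linarith [e ▸ h2]
    have hc : (0:ℝ) ≤ 2 - 2 * ε - pj := by linarith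
    nlinarith [mul_le_mul_of_nonneg_left h1' hc,
      mul_le_mul_of_nonneg_left h2' (by linarith : (0:ℝ) ≤ 2 * ε),
      mul_le_mul_of_nonneg_left h3 (by linarith : (0:ℝ) ≤ 2 * ε)]
  · intro hfeas
    have h' : Pa * (2 * pj - pj ^ 2) ≤ 2 * ε * Pm := (le_div_iff₀ hq).mp hfeas
    refine ⟨(1 - pj) * Pa / ε, Pa / ε, ?_, ?_, ?_, ?_, ?_⟩
    · exact div_nonneg (mul_nonneg (by linarith) hPa.le) hε0.le
    · rw [div_lt_div_iff₀ hε0 hε0]; nlinarith [mul_pos (mul_pos hpj0 hPa) hε0]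
    · have : Pa / ε - (1 - pj) * Pa / ε = pj / ε * Pa := by ring
      linarith [this.ge]
    · have key : (pj / (1 - ε) - 1) * (Pa / ε) + (1 - pj) * Pa / ε
          = pj / (1 - ε) * Pa := by field_simp; ring
      exact key.ge
    · have key : pj / 2 * ((1 - pj) * Pa / ε + Pa / ε)
          = Pa * (2 * pj - pj ^ 2) / (2 * ε) := by field_simp; ring
      rw [key, div_le_iff₀ (by linarith : (0:ℝ) < 2 * ε)]
      linarith
  · intro h
    rw [le_div_iff₀ hq]
    nlinarith [mul_nonneg hPa.le (sq_nonneg (1 - pj))]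
  · intro hl hu
    have ht1 : 2 * ε * Pm / Pa ≤ 1 := by rw [div_le_one hPa]; exact hl
    have hnn : 0 ≤ 1 - 2 * ε * Pm / Pa := by linarith
    have key : Pa ≤ 2 * ε * Pm / (2 * pj - pj ^ 2) ↔
        2 * pj - pj ^ 2 ≤ 2 * ε * Pm / Pa := by
      rw [le_div_iff₀ hq, le_div_iff₀ hPa]
      constructor <;> intro h <;> nlinarith
    rw [key]
    constructor
    · intro h
      have hs : Real.sqrt (1 - 2 * ε * Pm / Pa) ≤ 1 - pj := by
        rw [show (1 - pj) = Real.sqrt ((1 - pj) ^ 2) from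
          (Real.sqrt_sq (by linarith)).symm]
        exact Real.sqrt_le_sqrt (by nlinarith)
      linarith
    · intro h
      have hs : Real.sqrt (1 - 2 * ε * Pm / Pa) ≤ 1 - pj := by linarith
      nlinarith [Real.sq_sqrt hnn, Real.sqrt_nonneg (1 - 2 * ε * Pm / Pa)]
end

section
/- Let ε ∈ (0, 1/2), P_m > 0, P_a > 0, p_j ∈ [1 − ε, 1], and 0 ≤ P_min < P_max be reals satisfying the covertness constraints p_j ≥ 1 − ε, P_max − P_min ≥ (p_j/ε)·P_a, (p_j/(1−ε) − 1)·P_max + P_min ≥ (p_j/(1−ε))·P_a, and the average jamming power constraint (p_j/2)·(P_min + P_max) ≤ P_m. Then P_max ≥ P_a/ε and P_a ≤ 2ε·P_m/(1 − ε²). -/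
theorem necessary_conditions_of_feasibility
    (ε Pm Pa pj Pmin Pmax : ℝ)
    (hε0 : 0 < ε) (hε1 : ε < 1/2) (hPm : 0 < Pm) (hPa : 0 < Pa)
    (hpjl : 1 - ε ≤ pj) (hpju : pj ≤ 1)
    (hPmin : 0 ≤ Pmin) (hlt : Pmin < Pmax)
    (hc1 : 1 - ε ≤ pj)
    (hc2 : pj / ε * Pa ≤ Pmax - Pmin)
    (hc3 : pj / (1 - ε) * Pa ≤ (pj / (1 - ε) - 1) * Pmax + Pmin)
    (hc4 : pj / 2 * (Pmin + Pmax) ≤ Pm) :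
    Pa / ε ≤ Pmax ∧ Pa ≤ 2 * ε * Pm / (1 - ε ^ 2) := by
  have hE : (0:ℝ) < 1 - ε := by linarith
  have hpj : (0:ℝ) < pj := by linarith
  have h2 : pj * Pa ≤ ε * (Pmax - Pmin) := by
    rw [div_mul_eq_mul_div, div_le_iff₀ hε0] at hc2
    nlinarith
  have h3 : pj * Pa ≤ (pj - (1 - ε)) * Pmax + (1 - ε) * Pmin := by
    have h := mul_le_mul_of_nonneg_right hc3 hE.le
    have hne : (1 - ε) ≠ 0 := ne_of_gt hE
    field_simp at h
    nlinarith
  have h1 : Pa / ε ≤ Pmax := by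
    rw [div_le_iff₀ hε0]
    nlinarith [mul_pos hpj hPa]
  refine ⟨h1, ?_⟩
  rw [le_div_iff₀ (by nlinarith : (0:ℝ) < 1 - ε ^ 2)]
  have hPmaxPa : Pa ≤ ε * Pmax := by nlinarith [(div_le_iff₀ hε0).mp h1]
  have hA := mul_le_mul_of_nonneg_left h3 (mul_pos hε0 hpj).le
  have hcoef : (0:ℝ) ≤ pj * (2 - 2*ε - pj) := by nlinarith
  have hB := mul_le_mul_of_nonneg_left hPmaxPa hcoef
  have hC : (1 - ε^2) * Pa ≤ pj * (2 - pj) * Pa := by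
    nlinarith [mul_nonneg (mul_nonneg (sub_nonneg.mpr hpjl)
      (by linarith : (0:ℝ) ≤ 1 + ε - pj)) hPa.le]
  have hD := mul_le_mul_of_nonneg_left hc4 (mul_pos hε0 hE).le
  nlinarith [mul_pos hε0 hPm, hA, hB, hC, hD]
end

section
/- Let ε ∈ (0, 1/2), P_m > 0, and P_a, P_r be reals with 0 < P_a ≤ 2ε·P_m/(1 − ε²) and P_a ≤ P_r ≤ P_a/ε. For reals p_j and 0 ≤ P_min < P_max, define the outage λ = 0 if P_r ≥ P_max, λ = p_j·(P_max − P_r)/(P_max − P_min) if P_min ≤ P_r ≤ P_max, and λ = p_j if P_r ≤ P_min. Then for every (p_j, P_min, P_max) satisfying the covertness constraints p_j ≥ 1 − ε, P_max − P_min ≥ (p_j/ε)·P_a, (p_j/(1−ε) − 1)·P_max + P_min ≥ (p_j/(1−ε))·P_a, p_j ≤ 1, and the average jamming power constraint (p_j/2)·(P_min + P_max) ≤ P_m, one has λ ≥ 1 − ε·P_r/P_a; moreover, the choice p_j = 1 − ε, P_min = P_a, P_max = P_a/ε satisfies all these constraints and achieves λ = 1 − ε·P_r/P_a. -/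
/-!
Write `D = P_max - P_min`. Between `P_min` and `P_max` the outage `p_j (P_max - P_r) / D` is
affine in `P_r` with slope `-p_j / D ≥ -ε / P_a` (second constraint), and at `P_r = P_a` it is
at least `1 - ε` (third constraint); the bound `1 - ε P_r / P_a` has slope `-ε / P_a` and value
`1 - ε` there. The two constraints together also force `P_max ≥ P_a / ε`, which settles
`P_r ≥ P_max`, while `P_r < P_min` gives outage `p_j ≥ 1 - ε`. The choice `p_j = 1 - ε`,
`[P_min, P_max] = [P_a, P_a / ε]` makes every inequality an equality.
-/

noncomputable def outage (Pr pj Pmin Pmax : ℝ) : ℝ :=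
  if Pmax ≤ Pr then 0 else if Pmin ≤ Pr then pj * (Pmax - Pr) / (Pmax - Pmin) else pj

section

variable {ε Pa Pr pj Pmin Pmax : ℝ}

lemma div_mul_le_iff_le_mul (hε : 0 < ε) {c : ℝ} :
    pj / ε * Pa ≤ c ↔ pj * Pa ≤ ε * c := by
  rw [div_mul_eq_mul_div, div_le_iff₀' hε]

lemma le_mul_max_of_covert (hε0 : 0 ≤ ε) (hε1 : ε ≤ 1) (hpj : 0 < pj)
    (hwidth : pj * Pa ≤ ε * (Pmax - Pmin))
    (hlevel : pj * Pa ≤ (pj - (1 - ε)) * Pmax + (1 - ε) * Pmin) : Pa ≤ ε * Pmax := by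
  have h : pj * Pa ≤ pj * (ε * Pmax) := by
    nlinarith [mul_le_mul_of_nonneg_left hlevel hε0,
      mul_le_mul_of_nonneg_left hwidth (sub_nonneg.2 hε1)]
  exact le_of_mul_le_mul_left h hpj

lemma le_outage_of_covert (hε0 : 0 < ε) (hε1 : ε < 1) (hPa : 0 < Pa) (hPr : Pa ≤ Pr)
    (hpj : 1 - ε ≤ pj) (hwidth : pj * Pa ≤ ε * (Pmax - Pmin))
    (hlevel : pj * Pa ≤ (pj - (1 - ε)) * Pmax + (1 - ε) * Pmin) :
    1 - ε * Pr / Pa ≤ outage Pr pj Pmin Pmax := by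
  have hbound : 1 - ε * Pr / Pa = (Pa - ε * Pr) / Pa := by field_simp
  unfold outage
  split_ifs with hmax hmin
  · have : Pa ≤ ε * Pr :=
      (le_mul_max_of_covert hε0.le hε1.le (by linarith) hwidth hlevel).trans
        (mul_le_mul_of_nonneg_left hmax hε0.le)
    rw [hbound]
    exact div_nonpos_of_nonpos_of_nonneg (by linarith) hPa.le
  · rw [hbound, div_le_div_iff₀ hPa (by linarith)]
    linarith [mul_nonneg (sub_nonneg.2 hPr) (sub_nonneg.2 hwidth),
      mul_le_mul_of_nonneg_left hlevel hPa.le]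
  · have : ε ≤ ε * Pr / Pa := by rw [le_div_iff₀ hPa]; nlinarith
    linarith

lemma outage_optimal (hε0 : 0 < ε) (hε1 : ε < 1) (hPa : 0 < Pa)
    (hPr1 : Pa ≤ Pr) (hPr2 : Pr ≤ Pa / ε) :
    outage Pr (1 - ε) Pa (Pa / ε) = 1 - ε * Pr / Pa := by
  unfold outage
  rcases hPr2.eq_or_lt with rfl | hlt
  · rw [if_pos le_rfl]
    field_simp
    ring
  · rw [if_neg hlt.not_ge, if_pos hPr1]
    have : (1 : ℝ) - ε ≠ 0 := by linarith
    field_simp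

lemma avg_power_optimal_le {Pm : ℝ} (hε0 : 0 < ε) (hε1 : ε < 1)
    (hPaPm : Pa ≤ 2 * ε * Pm / (1 - ε ^ 2)) : (1 - ε) / 2 * (Pa + Pa / ε) ≤ Pm := by
  have hpow : (1 - ε) / 2 * (Pa + Pa / ε) = Pa * (1 - ε ^ 2) / (2 * ε) := by
    field_simp
    ring
  rw [hpow, div_le_iff₀ (by positivity)]
  rw [le_div_iff₀ (by nlinarith)] at hPaPm
  linarith

end

theorem min_outage_case_Pa_le_Pr_le_Pa_div_eps_general
    (ε Pm Pa Pr : ℝ)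
    (hε0 : 0 < ε) (hε1 : ε < 1/2)
    (hPa : 0 < Pa) (hPaPm : Pa ≤ 2 * ε * Pm / (1 - ε ^ 2))
    (hPr1 : Pa ≤ Pr) (hPr2 : Pr ≤ Pa / ε)
    (lam : ℝ → ℝ → ℝ → ℝ)
    (hlam : ∀ pj Pmin Pmax : ℝ, lam pj Pmin Pmax =
      if Pmax ≤ Pr then 0
      else if Pmin ≤ Pr then pj * (Pmax - Pr) / (Pmax - Pmin)
      else pj) :
    (∀ pj Pmin Pmax : ℝ,
        1 - ε ≤ pj → pj ≤ 1 → 0 ≤ Pmin → Pmin < Pmax →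
        pj / ε * Pa ≤ Pmax - Pmin →
        pj / (1 - ε) * Pa ≤ (pj / (1 - ε) - 1) * Pmax + Pmin →
        pj / 2 * (Pmin + Pmax) ≤ Pm →
        1 - ε * Pr / Pa ≤ lam pj Pmin Pmax) ∧
    (1 - ε ≤ (1 - ε) ∧ (1 - ε : ℝ) ≤ 1 ∧ 0 ≤ Pa ∧ Pa < Pa / ε ∧
      (1 - ε) / ε * Pa ≤ Pa / ε - Pa ∧
      (1 - ε) / (1 - ε) * Pa ≤ ((1 - ε) / (1 - ε) - 1) * (Pa / ε) + Pa ∧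
      (1 - ε) / 2 * (Pa + Pa / ε) ≤ Pm ∧
      lam (1 - ε) Pa (Pa / ε) = 1 - ε * Pr / Pa) := by
  obtain rfl : lam = outage Pr := funext fun pj => funext fun Pmin => funext (hlam pj Pmin)
  have hε1' : ε < 1 := by linarith
  have h1ε : 0 < 1 - ε := sub_pos.2 hε1'
  refine ⟨fun pj Pmin Pmax hpj _ _ _ hwidth hlevel _ => ?_, le_rfl, by linarith, hPa.le,
    ?_, ?_, ?_,
    avg_power_optimal_le hε0 hε1' hPaPm, outage_optimal hε0 hε1' hPa hPr1 hPr2⟩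
  · have hlevel' := (div_mul_le_iff_le_mul h1ε).1 hlevel
    refine le_outage_of_covert hε0 hε1' hPa hPr1 hpj ((div_mul_le_iff_le_mul hε0).1 hwidth)
      (hlevel'.trans_eq ?_)
    field_simp [h1ε.ne']
  · exact (lt_div_iff₀ hε0).2 (mul_lt_of_lt_one_right hPa hε1')
  · rw [div_mul_le_iff_le_mul hε0]
    exact le_of_eq (by field_simp)
  · rw [div_self h1ε.ne']
    simp

theorem min_outage_case_Pa_le_Pr_le_Pa_div_eps
    (ε Pm Pa Pr : ℝ)
    (hε0 : 0 < ε) (hε1 : ε < 1/2) (hPm : 0 < Pm)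
    (hPa : 0 < Pa) (hPaPm : Pa ≤ 2 * ε * Pm / (1 - ε ^ 2))
    (hPr1 : Pa ≤ Pr) (hPr2 : Pr ≤ Pa / ε)
    (lam : ℝ → ℝ → ℝ → ℝ)
    (hlam : ∀ pj Pmin Pmax : ℝ, lam pj Pmin Pmax =
      if Pmax ≤ Pr then 0
      else if Pmin ≤ Pr then pj * (Pmax - Pr) / (Pmax - Pmin)
      else pj) :
    (∀ pj Pmin Pmax : ℝ,
        1 - ε ≤ pj → pj ≤ 1 → 0 ≤ Pmin → Pmin < Pmax →
        pj / ε * Pa ≤ Pmax - Pmin →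
        pj / (1 - ε) * Pa ≤ (pj / (1 - ε) - 1) * Pmax + Pmin →
        pj / 2 * (Pmin + Pmax) ≤ Pm →
        1 - ε * Pr / Pa ≤ lam pj Pmin Pmax) ∧
    (1 - ε ≤ (1 - ε) ∧ (1 - ε : ℝ) ≤ 1 ∧ 0 ≤ Pa ∧ Pa < Pa / ε ∧
      (1 - ε) / ε * Pa ≤ Pa / ε - Pa ∧
      (1 - ε) / (1 - ε) * Pa ≤ ((1 - ε) / (1 - ε) - 1) * (Pa / ε) + Pa ∧
      (1 - ε) / 2 * (Pa + Pa / ε) ≤ Pm ∧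
      lam (1 - ε) Pa (Pa / ε) = 1 - ε * Pr / Pa) :=
  min_outage_case_Pa_le_Pr_le_Pa_div_eps_general ε Pm Pa Pr hε0 hε1 hPa hPaPm hPr1 hPr2 lam hlam
end

section
/- Let ε ∈ (0, 1/2), P_m > 0, and P_a, P_r be reals with 0 < P_a ≤ 2ε·P_m/(1 − ε²) and 0 ≤ P_r < P_a. For reals p_j and 0 ≤ P_min < P_max, define the outage λ = 0 if P_r ≥ P_max, λ = p_j·(P_max − P_r)/(P_max − P_min) if P_min ≤ P_r ≤ P_max, and λ = p_j if P_r ≤ P_min. Then for every (p_j, P_min, P_max) satisfying the covertness constraints p_j ≥ 1 − ε, P_max − P_min ≥ (p_j/ε)·P_a, (p_j/(1−ε) − 1)·P_max + P_min ≥ (p_j/(1−ε))·P_a, p_j ≤ 1, and the average jamming power constraint (p_j/2)·(P_min + P_max) ≤ P_m, one has λ ≥ 1 − ε; moreover, the choice p_j = 1 − ε, P_min = P_a, P_max = P_a/ε satisfies all these constraints and achieves λ = 1 − ε. -/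
theorem outage_eq_of_lt_of_le {Pr pj Pmin Pmax : ℝ} (hPr : Pr < Pmin) (hmin : Pmin ≤ Pmax) :
    outage Pr pj Pmin Pmax = pj := by
  rw [outage, if_neg (by linarith), if_neg hPr.not_ge]

theorem le_outage {Pr Pa q pj Pmin Pmax : ℝ} (hq : 0 < q) (hqpj : q ≤ pj) (hmin : Pmin < Pmax)
    (hPr : Pr < Pa) (hcov : pj * Pa ≤ (pj - q) * Pmax + q * Pmin) :
    q ≤ outage Pr pj Pmin Pmax := by
  have hpj : 0 < pj := hq.trans_le hqpj
  have hPa : Pa ≤ Pmax := le_of_mul_le_mul_left (by nlinarith) hpj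
  unfold outage
  split_ifs with hmax hmin'
  · linarith
  · rw [le_div_iff₀ (by linarith)]
    nlinarith [mul_le_mul_of_nonneg_left hPr.le hpj.le]
  · exact hqpj

theorem mul_le_of_div_mul_le {q pj Pa Pmin Pmax : ℝ} (hq : 0 < q)
    (h : pj / q * Pa ≤ (pj / q - 1) * Pmax + Pmin) :
    pj * Pa ≤ (pj - q) * Pmax + q * Pmin :=
  calc pj * Pa = pj / q * Pa * q := by field_simp
    _ ≤ ((pj / q - 1) * Pmax + Pmin) * q := by gcongr
    _ = (pj - q) * Pmax + q * Pmin := by field_simp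

theorem avg_power_le {ε Pa Pm : ℝ} (hε0 : 0 < ε) (hε1 : ε < 1)
    (h : Pa ≤ 2 * ε * Pm / (1 - ε ^ 2)) :
    (1 - ε) / 2 * (Pa + Pa / ε) ≤ Pm := by
  rw [le_div_iff₀ (by nlinarith)] at h
  calc (1 - ε) / 2 * (Pa + Pa / ε) = Pa * (1 - ε ^ 2) / (2 * ε) := by field_simp; ring
    _ ≤ 2 * ε * Pm / (2 * ε) := by gcongr
    _ = Pm := by field_simp

theorem min_outage_case_Pr_lt_Pa_general
    (ε Pm Pa Pr : ℝ)
    (hε0 : 0 < ε) (hε1 : ε < 1/2)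
    (hPa : 0 < Pa) (hPaPm : Pa ≤ 2 * ε * Pm / (1 - ε ^ 2))
    (hPr2 : Pr < Pa)
    (lam : ℝ → ℝ → ℝ → ℝ)
    (hlam : ∀ pj Pmin Pmax : ℝ, lam pj Pmin Pmax =
      if Pmax ≤ Pr then 0
      else if Pmin ≤ Pr then pj * (Pmax - Pr) / (Pmax - Pmin)
      else pj) :
    (∀ pj Pmin Pmax : ℝ,
        1 - ε ≤ pj → pj ≤ 1 → 0 ≤ Pmin → Pmin < Pmax →
        pj / ε * Pa ≤ Pmax - Pmin →
        pj / (1 - ε) * Pa ≤ (pj / (1 - ε) - 1) * Pmax + Pmin →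
        pj / 2 * (Pmin + Pmax) ≤ Pm →
        1 - ε ≤ lam pj Pmin Pmax) ∧
    (1 - ε ≤ (1 - ε) ∧ (1 - ε : ℝ) ≤ 1 ∧ 0 ≤ Pa ∧ Pa < Pa / ε ∧
      (1 - ε) / ε * Pa ≤ Pa / ε - Pa ∧
      (1 - ε) / (1 - ε) * Pa ≤ ((1 - ε) / (1 - ε) - 1) * (Pa / ε) + Pa ∧
      (1 - ε) / 2 * (Pa + Pa / ε) ≤ Pm ∧
      lam (1 - ε) Pa (Pa / ε) = 1 - ε) := by
  have hε : 0 < 1 - ε := by linarith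
  have hlam' : ∀ pj Pmin Pmax, lam pj Pmin Pmax = outage Pr pj Pmin Pmax := hlam
  have hPa_lt : Pa < Pa / ε := by rw [lt_div_iff₀ hε0]; nlinarith
  refine ⟨fun pj Pmin Pmax hpj _ _ hmin _ hcov _ => ?_,
    le_rfl, by linarith, hPa.le, hPa_lt, ?_, ?_, avg_power_le hε0 (by linarith) hPaPm, ?_⟩
  · rw [hlam']
    exact le_outage hε hpj hmin hPr2 (mul_le_of_div_mul_le hε hcov)
  · exact le_of_eq (by field_simp)
  · rw [div_self hε.ne']
    linarith
  · rw [hlam', outage_eq_of_lt_of_le hPr2 hPa_lt.le]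

theorem min_outage_case_Pr_lt_Pa
    (ε Pm Pa Pr : ℝ)
    (hε0 : 0 < ε) (hε1 : ε < 1/2) (hPm : 0 < Pm)
    (hPa : 0 < Pa) (hPaPm : Pa ≤ 2 * ε * Pm / (1 - ε ^ 2))
    (hPr1 : 0 ≤ Pr) (hPr2 : Pr < Pa)
    (lam : ℝ → ℝ → ℝ → ℝ)
    (hlam : ∀ pj Pmin Pmax : ℝ, lam pj Pmin Pmax =
      if Pmax ≤ Pr then 0
      else if Pmin ≤ Pr then pj * (Pmax - Pr) / (Pmax - Pmin)
      else pj) :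
    (∀ pj Pmin Pmax : ℝ,
        1 - ε ≤ pj → pj ≤ 1 → 0 ≤ Pmin → Pmin < Pmax →
        pj / ε * Pa ≤ Pmax - Pmin →
        pj / (1 - ε) * Pa ≤ (pj / (1 - ε) - 1) * Pmax + Pmin →
        pj / 2 * (Pmin + Pmax) ≤ Pm →
        1 - ε ≤ lam pj Pmin Pmax) ∧
    (1 - ε ≤ (1 - ε) ∧ (1 - ε : ℝ) ≤ 1 ∧ 0 ≤ Pa ∧ Pa < Pa / ε ∧
      (1 - ε) / ε * Pa ≤ Pa / ε - Pa ∧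
      (1 - ε) / (1 - ε) * Pa ≤ ((1 - ε) / (1 - ε) - 1) * (Pa / ε) + Pa ∧
      (1 - ε) / 2 * (Pa + Pa / ε) ≤ Pm ∧
      lam (1 - ε) Pa (Pa / ε) = 1 - ε) :=
  min_outage_case_Pr_lt_Pa_general ε Pm Pa Pr hε0 hε1 hPa hPaPm hPr2 lam hlam
end

section
/- Let ε ∈ (0, 1/2), P_m > 0, and P_a, P_r be reals with 0 < P_a ≤ 2ε·P_m/(1 − ε²) and P_r ≥ P_a/ε. Then there exist reals p_j, P_min, P_max with 1 − ε ≤ p_j ≤ 1 and 0 ≤ P_min < P_max satisfying the covertness constraints p_j ≥ 1 − ε, P_max − P_min ≥ (p_j/ε)·P_a, (p_j/(1−ε) − 1)·P_max + P_min ≥ (p_j/(1−ε))·P_a, the average jamming power constraint (p_j/2)·(P_min + P_max) ≤ P_m, and additionally P_max ≤ P_r (so that the transmission outage probability is zero); one such choice is p_j = 1 − ε, P_min = P_a, P_max = P_a/ε. -/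
theorem zero_outage_case_Pr_ge_Pa_div_eps
    (ε Pm Pa Pr : ℝ)
    (hε0 : 0 < ε) (hε1 : ε < 1/2) (hPm : 0 < Pm)
    (hPa : 0 < Pa) (hPaPm : Pa ≤ 2 * ε * Pm / (1 - ε ^ 2))
    (hPr : Pa / ε ≤ Pr) :
    (∃ pj Pmin Pmax : ℝ,
        1 - ε ≤ pj ∧ pj ≤ 1 ∧ 0 ≤ Pmin ∧ Pmin < Pmax ∧
        pj / ε * Pa ≤ Pmax - Pmin ∧
        pj / (1 - ε) * Pa ≤ (pj / (1 - ε) - 1) * Pmax + Pmin ∧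
        pj / 2 * (Pmin + Pmax) ≤ Pm ∧
        Pmax ≤ Pr) ∧
    (1 - ε ≤ (1 - ε) ∧ (1 - ε : ℝ) ≤ 1 ∧ 0 ≤ Pa ∧ Pa < Pa / ε ∧
      (1 - ε) / ε * Pa ≤ Pa / ε - Pa ∧
      (1 - ε) / (1 - ε) * Pa ≤ ((1 - ε) / (1 - ε) - 1) * (Pa / ε) + Pa ∧
      (1 - ε) / 2 * (Pa + Pa / ε) ≤ Pm ∧
      Pa / ε ≤ Pr) := by
  have hε1' : ε < 1 := by linarith
  have h1 : (0:ℝ) < 1 - ε := by linarith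
  have h2 : (0:ℝ) < 1 - ε ^ 2 := by nlinarith
  rw [le_div_iff₀ h2] at hPaPm
  have hcanc : Pa / ε * ε = Pa := div_mul_cancel₀ Pa hε0.ne'
  have hlt : Pa < Pa / ε := by
    rw [lt_div_iff₀ hε0]; nlinarith
  have hkey : (1 - ε) / 2 * (Pa + Pa / ε) ≤ Pm := by nlinarith
  have hA : (1 - ε) / ε * Pa ≤ Pa / ε - Pa := by
    rw [div_mul_eq_mul_div, sub_mul, one_mul, sub_div,
      mul_comm ε Pa, mul_div_assoc, div_self hε0.ne', mul_one]
  have hB : (1 - ε) / (1 - ε) * Pa ≤ ((1 - ε) / (1 - ε) - 1) * (Pa / ε) + Pa := by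
    rw [div_self h1.ne']; ring_nf
    exact le_refl _
  have big : (1 - ε ≤ (1 - ε) ∧ (1 - ε : ℝ) ≤ 1 ∧ 0 ≤ Pa ∧ Pa < Pa / ε ∧
      (1 - ε) / ε * Pa ≤ Pa / ε - Pa ∧
      (1 - ε) / (1 - ε) * Pa ≤ ((1 - ε) / (1 - ε) - 1) * (Pa / ε) + Pa ∧
      (1 - ε) / 2 * (Pa + Pa / ε) ≤ Pm ∧
      Pa / ε ≤ Pr) :=
    ⟨le_refl _, by linarith, hPa.le, hlt, hA, hB, hkey, hPr⟩
  exact ⟨⟨1 - ε, Pa, Pa / ε, big⟩, big⟩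
end

section
/- Let ε ∈ (0, 1/2), p_j with 1 − ε ≤ p_j ≤ 1, and 0 ≤ P_min < P_max be reals. Define P_au = (1 − (1−ε)/p_j)·P_max + ((1−ε)/p_j)·P_min if P_min/P_max ≤ 1 − p_j, and P_au = (ε/p_j)·(P_max − P_min) if P_min/P_max ≥ 1 − p_j. Then for every real P_a > 0, the covertness constraints P_max − P_min ≥ (p_j/ε)·P_a and (p_j/(1−ε) − 1)·P_max + P_min ≥ (p_j/(1−ε))·P_a hold if and only if P_a ≤ P_au; equivalently, P_au = min((1 − (1−ε)/p_j)·P_max + ((1−ε)/p_j)·P_min, (ε/p_j)·(P_max − P_min)). -/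
/-! Each covertness constraint is linear in `Pa`, so it reads `Pa ≤ bound`. The two bounds differ
by `((1 - pj) * Pmax - Pmin) / pj`, whose sign is what the test `Pmin / Pmax ≤ 1 - pj` decides. -/

section OrderedField

variable {K : Type*} [Field K] [LinearOrder K] [IsStrictOrderedRing K]

theorem div_mul_le_iff_le_div_mul {a b x y : K} (ha : 0 < a) (hb : 0 < b) :
    a / b * x ≤ y ↔ x ≤ b / a * y := by
  rw [div_mul_eq_mul_div, div_le_iff₀ hb, div_mul_eq_mul_div, le_div_iff₀ ha, mul_comm x,
    mul_comm y]

theorem div_mul_le_sub_one_mul_add_iff {a b x M m : K} (ha : 0 < a) (hb : 0 < b) :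
    a / b * x ≤ (a / b - 1) * M + m ↔ x ≤ (1 - b / a) * M + b / a * m := by
  rw [div_mul_le_iff_le_div_mul ha hb]
  convert Iff.rfl using 2
  field_simp

theorem ite_eq_min_of_iff {α : Type*} [LinearOrder α] {P : Prop} [Decidable P] {a b : α}
    (h : P ↔ a ≤ b) : (if P then a else b) = min a b := by
  rw [min_def]
  exact if_congr h rfl rfl

theorem div_le_one_sub_iff_le {ε p m M : K} (hp : 0 < p) (hM : 0 < M) :
    m / M ≤ 1 - p ↔
      (1 - (1 - ε) / p) * M + (1 - ε) / p * m ≤ ε / p * (M - m) := by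
  have hgap : ε / p * (M - m) - ((1 - (1 - ε) / p) * M + (1 - ε) / p * m)
      = ((1 - p) * M - m) / p := by
    field_simp
    ring
  rw [div_le_iff₀ hM, ← sub_nonneg (a := ε / p * (M - m)), hgap, le_div_iff₀ hp, zero_mul,
    sub_nonneg, mul_comm]

end OrderedField

theorem alice_max_power_general
    (ε pj Pmin Pmax : ℝ)
    (hε0 : 0 < ε) (hε1 : ε < 1/2)
    (hpjl : 1 - ε ≤ pj)
    (hPmin : 0 ≤ Pmin) (hlt : Pmin < Pmax)
    (Pau : ℝ)
    (hPau : Pau =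
      if Pmin / Pmax ≤ 1 - pj then
        (1 - (1 - ε) / pj) * Pmax + (1 - ε) / pj * Pmin
      else ε / pj * (Pmax - Pmin)) :
    (∀ Pa : ℝ, 0 < Pa →
      ((pj / ε * Pa ≤ Pmax - Pmin ∧
          pj / (1 - ε) * Pa ≤ (pj / (1 - ε) - 1) * Pmax + Pmin) ↔
        Pa ≤ Pau)) ∧
    Pau = min ((1 - (1 - ε) / pj) * Pmax + (1 - ε) / pj * Pmin)
              (ε / pj * (Pmax - Pmin)) := by
  have h1ε : 0 < 1 - ε := by linarith
  have hpj : 0 < pj := h1ε.trans_le hpjl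
  have hPmax : 0 < Pmax := hPmin.trans_lt hlt
  have hmin := hPau.trans (ite_eq_min_of_iff (div_le_one_sub_iff_le hpj hPmax))
  refine ⟨fun Pa _ => ?_, hmin⟩
  rw [hmin, le_min_iff, div_mul_le_iff_le_div_mul hpj hε0,
    div_mul_le_sub_one_mul_add_iff hpj h1ε, and_comm]

theorem alice_max_power
    (ε pj Pmin Pmax : ℝ)
    (hε0 : 0 < ε) (hε1 : ε < 1/2)
    (hpjl : 1 - ε ≤ pj) (hpju : pj ≤ 1)
    (hPmin : 0 ≤ Pmin) (hlt : Pmin < Pmax)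
    (Pau : ℝ)
    (hPau : Pau =
      if Pmin / Pmax ≤ 1 - pj then
        (1 - (1 - ε) / pj) * Pmax + (1 - ε) / pj * Pmin
      else ε / pj * (Pmax - Pmin)) :
    (∀ Pa : ℝ, 0 < Pa →
      ((pj / ε * Pa ≤ Pmax - Pmin ∧
          pj / (1 - ε) * Pa ≤ (pj / (1 - ε) - 1) * Pmax + Pmin) ↔
        Pa ≤ Pau)) ∧
    Pau = min ((1 - (1 - ε) / pj) * Pmax + (1 - ε) / pj * Pmin)
              (ε / pj * (Pmax - Pmin)) :=
  alice_max_power_general ε pj Pmin Pmax hε0 hε1 hpjl hPmin hlt Pau hPau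
end

section
/- Let ε ∈ (0, 1/2), P_m > 0, σ_b² > 0, and let p_j, P_min, P_max, P_a be reals with P_a > 0, 1 − ε ≤ p_j ≤ 1, 0 ≤ P_min < P_max, satisfying the covertness constraints p_j ≥ 1 − ε, P_max − P_min ≥ (p_j/ε)·P_a, (p_j/(1−ε) − 1)·P_max + P_min ≥ (p_j/(1−ε))·P_a, and the average jamming power constraint (p_j/2)·(P_min + P_max) ≤ P_m. Then the throughput Ω_f = (1 − p_j)·log₂(1 + P_a/σ_b²) satisfies Ω_f ≤ ε·log₂(1 + 2ε·P_m/((1 − ε²)·σ_b²)); moreover, the choice p_j = 1 − ε, P_a = 2ε·P_m/(1 − ε²), P_min = P_a, P_max = P_a/ε satisfies all the constraints and achieves equality. -/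
theorem max_Omega_f
    (ε Pm σb : ℝ)
    (hε0 : 0 < ε) (hε1 : ε < 1/2) (hPm : 0 < Pm) (hσb : 0 < σb) :
    (∀ pj Pmin Pmax Pa : ℝ,
        0 < Pa → 1 - ε ≤ pj → pj ≤ 1 → 0 ≤ Pmin → Pmin < Pmax →
        pj / ε * Pa ≤ Pmax - Pmin →
        pj / (1 - ε) * Pa ≤ (pj / (1 - ε) - 1) * Pmax + Pmin →
        pj / 2 * (Pmin + Pmax) ≤ Pm →
        (1 - pj) * Real.logb 2 (1 + Pa / σb) ≤
          ε * Real.logb 2 (1 + 2 * ε * Pm / ((1 - ε ^ 2) * σb))) ∧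
    (0 < 2 * ε * Pm / (1 - ε ^ 2) ∧
      1 - ε ≤ (1 - ε) ∧ (1 - ε : ℝ) ≤ 1 ∧
      0 ≤ 2 * ε * Pm / (1 - ε ^ 2) ∧
      2 * ε * Pm / (1 - ε ^ 2) < 2 * ε * Pm / (1 - ε ^ 2) / ε ∧
      (1 - ε) / ε * (2 * ε * Pm / (1 - ε ^ 2)) ≤
        2 * ε * Pm / (1 - ε ^ 2) / ε - 2 * ε * Pm / (1 - ε ^ 2) ∧
      (1 - ε) / (1 - ε) * (2 * ε * Pm / (1 - ε ^ 2)) ≤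
        ((1 - ε) / (1 - ε) - 1) * (2 * ε * Pm / (1 - ε ^ 2) / ε) +
          2 * ε * Pm / (1 - ε ^ 2) ∧
      (1 - ε) / 2 * (2 * ε * Pm / (1 - ε ^ 2) + 2 * ε * Pm / (1 - ε ^ 2) / ε) ≤ Pm ∧
      (1 - (1 - ε)) * Real.logb 2 (1 + 2 * ε * Pm / (1 - ε ^ 2) / σb) =
        ε * Real.logb 2 (1 + 2 * ε * Pm / ((1 - ε ^ 2) * σb))) := by
  have hε' : 0 < 1 - ε := by linarith
  have hε2 : 0 < 1 - ε ^ 2 := by nlinarith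
  have hA : 0 < 2 * ε * Pm / (1 - ε ^ 2) := by positivity
  constructor
  · intro pj Pmin Pmax Pa hPa hpj1 hpj2 hPmin hlt h1 h2 h3
    have h1' : pj * Pa ≤ (Pmax - Pmin) * ε := by
      rw [div_mul_eq_mul_div, div_le_iff₀ hε0] at h1; exact h1
    have h2' : pj * Pa ≤ (pj - (1 - ε)) * Pmax + (1 - ε) * Pmin := by
      have h := mul_le_mul_of_nonneg_left h2 hε'.le
      have e1 : (1 - ε) * (pj / (1 - ε) * Pa) = pj * Pa := by
        field_simp
      have e2 : (1 - ε) * ((pj / (1 - ε) - 1) * Pmax + Pmin)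
          = (pj - (1 - ε)) * Pmax + (1 - ε) * Pmin := by
        field_simp
      rw [e1, e2] at h
      exact h
    have hkey : pj * (2 - pj) * Pa ≤ 2 * ε * Pm := by
      nlinarith [mul_le_mul_of_nonneg_left h1' (show (0:ℝ) ≤ 2 - 2*ε - pj by linarith),
        mul_le_mul_of_nonneg_left h2' (show (0:ℝ) ≤ 2*ε by linarith),
        mul_le_mul_of_nonneg_left h3 (show (0:ℝ) ≤ 2*ε by linarith)]
    have hquad : 1 - ε ^ 2 ≤ pj * (2 - pj) := by
      nlinarith [mul_nonneg (show (0:ℝ) ≤ ε - (1 - pj) by linarith)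
        (show (0:ℝ) ≤ ε + (1 - pj) by linarith)]
    have hPaA : Pa ≤ 2 * ε * Pm / (1 - ε ^ 2) := by
      rw [le_div_iff₀ hε2]
      nlinarith [mul_le_mul_of_nonneg_right hquad hPa.le]
    have hL1 : (0:ℝ) ≤ Real.logb 2 (1 + Pa / σb) := by
      apply Real.logb_nonneg one_lt_two
      have : 0 ≤ Pa / σb := by positivity
      linarith
    have hL2 : Real.logb 2 (1 + Pa / σb)
        ≤ Real.logb 2 (1 + 2 * ε * Pm / ((1 - ε ^ 2) * σb)) := by
      have h : Pa / σb ≤ 2 * ε * Pm / ((1 - ε ^ 2) * σb) := by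
        rw [← div_div]
        exact div_le_div_of_nonneg_right hPaA hσb.le
      apply Real.logb_le_logb_of_le one_lt_two (by positivity)
      linarith
    calc (1 - pj) * Real.logb 2 (1 + Pa / σb)
        ≤ ε * Real.logb 2 (1 + Pa / σb) := by
          apply mul_le_mul_of_nonneg_right (by linarith) hL1
      _ ≤ ε * Real.logb 2 (1 + 2 * ε * Pm / ((1 - ε ^ 2) * σb)) :=
          mul_le_mul_of_nonneg_left hL2 hε0.le
  · refine ⟨hA, le_refl _, by linarith, hA.le, ?_, ?_, ?_, ?_, ?_⟩
    · rw [lt_div_iff₀ hε0]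
      nlinarith
    · have h : (1 - ε) / ε * (2 * ε * Pm / (1 - ε ^ 2)) =
        2 * ε * Pm / (1 - ε ^ 2) / ε - 2 * ε * Pm / (1 - ε ^ 2) := by
        field_simp
      linarith [h.le]
    · have h : (1 - ε) / (1 - ε) * (2 * ε * Pm / (1 - ε ^ 2)) =
        ((1 - ε) / (1 - ε) - 1) * (2 * ε * Pm / (1 - ε ^ 2) / ε) +
          2 * ε * Pm / (1 - ε ^ 2) := by
        rw [div_self hε'.ne']
        ring
      linarith [h.le]
    · have h : (1 - ε) / 2 * (2 * ε * Pm / (1 - ε ^ 2) + 2 * ε * Pm / (1 - ε ^ 2) / ε) = Pm := by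
        field_simp
        ring
      linarith [h.le]
    · rw [div_div, show (1 - (1 - ε)) = ε by ring]
end

section
/- Let ε ∈ (0, 1/2), P_m > 0, σ_b² > 0, and let p_j, P_min, P_max, P_a be reals with P_a > 0, 1 − ε ≤ p_j ≤ 1, 0 ≤ P_min < P_max, satisfying the covertness constraints p_j ≥ 1 − ε, P_max − P_min ≥ (p_j/ε)·P_a, (p_j/(1−ε) − 1)·P_max + P_min ≥ (p_j/(1−ε))·P_a, and the average jamming power constraint (p_j/2)·(P_min + P_max) ≤ P_m. Then the throughput Ω_n = log₂(1 + P_a/(σ_b² + P_max)) satisfies Ω_n ≤ log₂(1 + 2ε·P_m/((1 − ε²)·σ_b² + 2·P_m)); moreover, the choice p_j = 1 − ε, P_a = 2ε·P_m/(1 − ε²), P_min = P_a, P_max = P_a/ε satisfies all the constraints and achieves equality. -/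
set_option maxHeartbeats 2000000 in
theorem max_Omega_n
    (ε Pm σb : ℝ)
    (hε0 : 0 < ε) (hε1 : ε < 1/2) (hPm : 0 < Pm) (hσb : 0 < σb) :
    (∀ pj Pmin Pmax Pa : ℝ,
        0 < Pa → 1 - ε ≤ pj → pj ≤ 1 → 0 ≤ Pmin → Pmin < Pmax →
        pj / ε * Pa ≤ Pmax - Pmin →
        pj / (1 - ε) * Pa ≤ (pj / (1 - ε) - 1) * Pmax + Pmin →
        pj / 2 * (Pmin + Pmax) ≤ Pm →
        Real.logb 2 (1 + Pa / (σb + Pmax)) ≤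
          Real.logb 2 (1 + 2 * ε * Pm / ((1 - ε ^ 2) * σb + 2 * Pm))) ∧
    (0 < 2 * ε * Pm / (1 - ε ^ 2) ∧
      1 - ε ≤ (1 - ε) ∧ (1 - ε : ℝ) ≤ 1 ∧
      0 ≤ 2 * ε * Pm / (1 - ε ^ 2) ∧
      2 * ε * Pm / (1 - ε ^ 2) < 2 * ε * Pm / (1 - ε ^ 2) / ε ∧
      (1 - ε) / ε * (2 * ε * Pm / (1 - ε ^ 2)) ≤
        2 * ε * Pm / (1 - ε ^ 2) / ε - 2 * ε * Pm / (1 - ε ^ 2) ∧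
      (1 - ε) / (1 - ε) * (2 * ε * Pm / (1 - ε ^ 2)) ≤
        ((1 - ε) / (1 - ε) - 1) * (2 * ε * Pm / (1 - ε ^ 2) / ε) +
          2 * ε * Pm / (1 - ε ^ 2) ∧
      (1 - ε) / 2 * (2 * ε * Pm / (1 - ε ^ 2) + 2 * ε * Pm / (1 - ε ^ 2) / ε) ≤ Pm ∧
      Real.logb 2 (1 + 2 * ε * Pm / (1 - ε ^ 2) / (σb + 2 * ε * Pm / (1 - ε ^ 2) / ε)) =
        Real.logb 2 (1 + 2 * ε * Pm / ((1 - ε ^ 2) * σb + 2 * Pm))) := by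
  have hε1' : (0:ℝ) < 1 - ε := by linarith
  have hε2 : (0:ℝ) < 1 - ε ^ 2 := by nlinarith
  have hA : 0 < 2 * ε * Pm / (1 - ε ^ 2) := by positivity
  have hT : 0 < (1 - ε ^ 2) * σb + 2 * Pm := by positivity
  constructor
  · intro pj Pmin Pmax Pa hPa hpjl hpju hPmin hlt h1 h2 h3
    have hpj0 : 0 < pj := by linarith
    have hPmax : 0 < Pmax := lt_of_le_of_lt hPmin hlt
    -- clear denominators in h1, h2
    have h1' : pj * Pa ≤ (Pmax - Pmin) * ε := by
      rw [div_mul_eq_mul_div, div_le_iff₀ hε0] at h1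
      exact h1
    have h2' : pj * Pa ≤ (pj - (1 - ε)) * Pmax + (1 - ε) * Pmin := by
      have h := mul_le_mul_of_nonneg_right h2 hε1'.le
      have e1 : pj / (1 - ε) * Pa * (1 - ε) = pj * Pa := by
        field_simp
      have e2 : ((pj / (1 - ε) - 1) * Pmax + Pmin) * (1 - ε)
          = (pj - (1 - ε)) * Pmax + (1 - ε) * Pmin := by
        field_simp
      rw [e1, e2] at h
      exact h
    have h3' : pj * (Pmin + Pmax) ≤ 2 * Pm := by linarith
    -- key 1 : Pa ≤ ε * Pmax
    have hkey1 : Pa ≤ ε * Pmax := by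
      have hs : pj * Pa ≤ ε * (pj * Pmax) := by
        nlinarith [mul_le_mul_of_nonneg_left h1' hε1'.le,
          mul_le_mul_of_nonneg_left h2' hε0.le]
      nlinarith [mul_pos hpj0 (sub_pos.mpr hlt)]
    -- key 2 : (1 - ε^2) * Pa ≤ 2 * ε * Pm
    have hkey2 : (1 - ε ^ 2) * Pa ≤ 2 * ε * Pm := by
      -- pj^2 * Pa + pj*(2 - 2ε - pj) * Pmax ≤ 2*(1-ε)*Pm
      have hstep : pj ^ 2 * Pa + pj * (2 - 2*ε - pj) * Pmax ≤ 2 * (1 - ε) * Pm := by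
        nlinarith [mul_le_mul_of_nonneg_left h3' hε1'.le,
          mul_le_mul_of_nonneg_left h2' hpj0.le]
      have hc : (0:ℝ) < 2 - 2*ε - pj := by linarith
      have hPmaxPa : pj * (2 - 2*ε - pj) * Pa ≤ pj * (2 - 2*ε - pj) * (ε * Pmax) := by
        apply mul_le_mul_of_nonneg_left hkey1
        positivity
      have hsum : (1 - ε) * (pj * (2 - pj) * Pa) ≤ (1 - ε) * (2 * ε * Pm) := by
        nlinarith [mul_le_mul_of_nonneg_left hstep hε0.le, hPmaxPa]
      have hq : pj * (2 - pj) * Pa ≤ 2 * ε * Pm :=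
        le_of_mul_le_mul_left hsum hε1'
      have hpar : (1 - ε ^ 2) * Pa ≤ pj * (2 - pj) * Pa := by
        have : 1 - ε ^ 2 ≤ pj * (2 - pj) := by nlinarith
        exact mul_le_mul_of_nonneg_right this hPa.le
      linarith
    -- fraction inequality
    have hden : 0 < σb + Pmax := by linarith
    have hfrac : Pa / (σb + Pmax) ≤ 2 * ε * Pm / ((1 - ε ^ 2) * σb + 2 * Pm) := by
      rw [div_le_div_iff₀ hden hT]
      have e1 : (1 - ε ^ 2) * Pa * σb ≤ 2 * ε * Pm * σb :=
        mul_le_mul_of_nonneg_right hkey2 hσb.le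
      have e2 : 2 * Pm * Pa ≤ 2 * Pm * (ε * Pmax) :=
        mul_le_mul_of_nonneg_left hkey1 (by linarith)
      linarith [e1, e2]
    have hx : (0:ℝ) < 1 + Pa / (σb + Pmax) := by positivity
    exact Real.logb_le_logb_of_le one_lt_two hx (by linarith)
  · set A := 2 * ε * Pm / (1 - ε ^ 2) with hAdef
    refine ⟨hA, le_refl _, by linarith, hA.le, ?_, ?_, ?_, ?_, ?_⟩
    · rw [lt_div_iff₀ hε0]
      have := mul_pos hA hε1'
      nlinarith [this]
    · have h : (1 - ε) / ε * A = A / ε - A := by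
        field_simp
      linarith [h.le]
    · rw [div_self hε1'.ne']
      simp
    · have h : (1 - ε) / 2 * (A + A / ε) = Pm := by
        rw [hAdef]
        field_simp
        ring
      linarith [h.le]
    · congr 1
      have hd : 0 < σb + A / ε := by positivity
      have h : A / (σb + A / ε) = 2 * ε * Pm / ((1 - ε ^ 2) * σb + 2 * Pm) := by
        rw [div_eq_div_iff hd.ne' hT.ne', hAdef]
        field_simp
      rw [h]
end
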